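/- arXiv:1709.07473 — 4 statements merged into one kernel-verified Lean document; each statement's English description precedes it below -/
import Mathlib

section
/- With Φ and X as above, and with the weighted metric d(u,v) := sup_{x ∈ B_σ(x̄)} e^{-K|x - x̄|} |u(x) - v(x)| where K := 2LN, the map Φ : X → X satisfies d(Φ[u], Φ[v]) ≤ (1/2) d(u,v) for all u, v ∈ X; hence Φ has a unique fixed point. -/
open Set Function

/-- The weighted distance `d(u,v) := sup_{x ∈ B_σ(xbar)} e^{-K|x-xbar|₁} |u(x)-v(x)|₁`
used in the proof of Darboux's first theorem. -/
noncomputable def darbouxDist (n N : ℕ) (xbar : Fin n → ℝ) (σ K : ℝ)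
    (u v : Fin N → (Fin n → ℝ) → ℝ) : ℝ :=
  sSup ((fun x : Fin n → ℝ =>
    Real.exp (-(K * ∑ j, |x j - xbar j|)) * ∑ h, |u h x - v h x|) ''
    {x : Fin n → ℝ | ∑ j, |x j - xbar j| ≤ σ})

/-- The Picard-type map of the proof of Darboux's first theorem. -/
noncomputable def darbouxPhi (n N : ℕ) (idx : Fin N → Fin n)
    (f : Fin N → (Fin n → ℝ) → (Fin N → ℝ) → ℝ)
    (φ : Fin N → (Fin n → ℝ) → ℝ) (xbar : Fin n → ℝ)
    (u : Fin N → (Fin n → ℝ) → ℝ) : Fin N → (Fin n → ℝ) → ℝ :=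
  fun h x => φ h x +
    ∫ ξ in (xbar (idx h))..(x (idx h)),
      f h (Function.update x (idx h) ξ) (fun m => u m (Function.update x (idx h) ξ))

/-- Membership in the complete metric space `X` of the proof of Darboux's first
theorem: continuity on `B_σ(xbar)` together with `|u - φ|₁ ≤ b/2` there. -/
def memDarbouxX (n N : ℕ) (φ : Fin N → (Fin n → ℝ) → ℝ) (xbar : Fin n → ℝ)
    (b σ : ℝ) (u : Fin N → (Fin n → ℝ) → ℝ) : Prop :=
  ContinuousOn (fun x h => u h x) {x : Fin n → ℝ | ∑ j, |x j - xbar j| ≤ σ} ∧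
  ∀ x : Fin n → ℝ, (∑ j, |x j - xbar j| ≤ σ) → ∑ h, |u h x - φ h x| ≤ b / 2

/-!
Write `s(x) = |x - xbar|₁` and `d` for the weighted distance with `K = 2LN`. Along the
path `ξ ↦ x'^i_ξ` from `xbar_i` to `x_i`, `s(x'^i_ξ) = s(x) - |x_i - xbar_i| + |ξ - xbar_i|`, so
the Lipschitz bound gives `|f_{ih}(…u…) - f_{ih}(…v…)| ≤ L e^{K s(x'^i_ξ)} d(u,v)`, and
`∫ e^{K|ξ - xbar_i|} dξ ≤ e^{K|x_i - xbar_i|} / K` turns this into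
`|Φ[u]_{ih}(x) - Φ[v]_{ih}(x)| ≤ (L / K) e^{K s(x)} d(u,v)`. Summing the `N` components gives
the factor `NL/K = 1/2`. Since `d` is equivalent to the sup metric, in which `X` is complete,
some iterate of `Φ` is a sup-metric contraction, so Banach's theorem gives a fixed point, and the
contraction estimate gives its uniqueness.
-/

open MeasureTheory Real

section L1Ball

variable {ι : Type*} [Fintype ι]

def l1ClosedBall (c : ι → ℝ) (r : ℝ) : Set (ι → ℝ) := {x | ∑ j, |x j - c j| ≤ r}

variable {c x : ι → ℝ} {r : ℝ}

theorem l1ClosedBall_subset_l1ClosedBall {r' : ℝ} (h : r ≤ r') :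
    l1ClosedBall c r ⊆ l1ClosedBall c r' :=
  fun _ hx => le_trans hx h

theorem abs_sub_le_of_mem_l1ClosedBall (hx : x ∈ l1ClosedBall c r) (i : ι) : |x i - c i| ≤ r :=
  (Finset.single_le_sum (f := fun j => |x j - c j|) (fun _ _ => abs_nonneg _)
    (Finset.mem_univ i)).trans hx

theorem isClosed_l1ClosedBall : IsClosed (l1ClosedBall c r) :=
  isClosed_le (by fun_prop) continuous_const

theorem isCompact_l1ClosedBall : IsCompact (l1ClosedBall c r) := by
  refine Metric.isCompact_of_isClosed_isBounded isClosed_l1ClosedBall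
    ((Metric.isBounded_closedBall (x := c) (r := |r|)).subset fun x hx => ?_)
  exact (dist_pi_le_iff (abs_nonneg r)).2 fun i =>
    (abs_sub_le_of_mem_l1ClosedBall hx i).trans (le_abs_self r)

instance : CompactSpace (l1ClosedBall c r) :=
  isCompact_iff_compactSpace.mp isCompact_l1ClosedBall

variable [DecidableEq ι]

theorem sum_abs_update_sub (x c : ι → ℝ) (i : ι) (ξ : ℝ) :
    ∑ j, |update x i ξ j - c j| = ∑ j, |x j - c j| - |x i - c i| + |ξ - c i| := by
  have hupd : (fun j => |update x i ξ j - c j|) = update (fun j => |x j - c j|) i |ξ - c i| := by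
    ext j
    rcases eq_or_ne j i with rfl | hj <;> simp [update_of_ne, *]
  rw [hupd, Finset.sum_update_of_mem (Finset.mem_univ i),
    Finset.sum_eq_add_sum_sdiff_singleton_of_mem (Finset.mem_univ i) (fun j => |x j - c j|)]
  ring

theorem update_mem_l1ClosedBall (hx : x ∈ l1ClosedBall c r) {i : ι} {ξ : ℝ}
    (hξ : ξ ∈ uIcc (c i) (x i)) : update x i ξ ∈ l1ClosedBall c r := by
  have := abs_sub_left_of_mem_uIcc hξ
  change ∑ j, |update x i ξ j - c j| ≤ r
  rw [sum_abs_update_sub]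
  linarith [show ∑ j, |x j - c j| ≤ r from hx]

/-- Extending `F` to the whole space by Tietze reduces this to the continuity of parametric
integrals of continuous integrands. -/
theorem continuousOn_intervalIntegral_update {S : Set (ι → ℝ)} (hS : IsClosed S)
    {F : (ι → ℝ) → ℝ} (hF : ContinuousOn F S) (i : ι) (ξ₀ : ℝ)
    (hSi : ∀ x ∈ S, ∀ ξ ∈ uIcc ξ₀ (x i), update x i ξ ∈ S) :
    ContinuousOn (fun x => ∫ ξ in ξ₀..x i, F (update x i ξ)) S := by
  obtain ⟨G, hG⟩ := ContinuousMap.exists_restrict_eq hS ⟨S.domRestrict F, hF.domRestrict⟩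
  have hGF : EqOn G F S := fun x hx => ContinuousMap.congr_fun hG ⟨x, hx⟩
  have hcont : Continuous fun x => ∫ ξ in ξ₀..x i, G (update x i ξ) :=
    intervalIntegral.continuous_parametric_intervalIntegral_of_continuous
      (f := fun x ξ => G (update x i ξ))
      (G.continuous.comp (continuous_fst.update i continuous_snd)) (continuous_apply i)
  refine hcont.continuousOn.congr fun x hx => intervalIntegral.integral_congr fun ξ hξ => ?_
  exact (hGF (hSi x hx ξ hξ)).symm

end L1Ball

theorem abs_intervalIntegral_le_of_abs_le_mul_exp_of_le {g : ℝ → ℝ} {A B C K : ℝ}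
    (hAB : A ≤ B) (hK : 0 < K) (hC : 0 ≤ C)
    (hg : ∀ ξ ∈ uIcc A B, |g ξ| ≤ C * exp (K * |ξ - A|)) :
    |∫ ξ in A..B, g ξ| ≤ C / K * exp (K * |B - A|) := by
  have hprim : ∀ ξ ∈ uIcc A B, HasDerivAt (fun ξ => C / K * exp (K * (ξ - A)))
      (C * exp (K * (ξ - A))) ξ := by
    intro ξ _
    refine ((((hasDerivAt_id ξ).sub_const A).const_mul K).exp.const_mul (C / K)).congr_deriv ?_
    simp only [id, mul_one]
    field_simp
  have hint : IntervalIntegrable (fun ξ => C * exp (K * (ξ - A))) volume A B :=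
    (by fun_prop : Continuous fun ξ => C * exp (K * (ξ - A))).intervalIntegrable A B
  calc |∫ ξ in A..B, g ξ|
      ≤ ∫ ξ in A..B, C * exp (K * (ξ - A)) := by
        rw [← Real.norm_eq_abs]
        refine intervalIntegral.norm_integral_le_of_norm_le hAB (ae_of_all _ fun ξ hξ => ?_) hint
        have hξ' : ξ ∈ uIcc A B := uIoc_subset_uIcc (uIoc_of_le hAB ▸ hξ)
        simpa [abs_of_nonneg (sub_nonneg.2 hξ.1.le)] using hg ξ hξ'
    _ = C / K * exp (K * (B - A)) - C / K * exp (K * (A - A)) :=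
        intervalIntegral.integral_eq_sub_of_hasDerivAt hprim hint
    _ ≤ C / K * exp (K * |B - A|) := by
        rw [abs_of_nonneg (sub_nonneg.2 hAB)]
        have : 0 ≤ C / K * exp (K * (A - A)) := by positivity
        linarith

theorem abs_intervalIntegral_le_of_abs_le_mul_exp {g : ℝ → ℝ} {A B C K : ℝ}
    (hK : 0 < K) (hC : 0 ≤ C) (hg : ∀ ξ ∈ uIcc A B, |g ξ| ≤ C * exp (K * |ξ - A|)) :
    |∫ ξ in A..B, g ξ| ≤ C / K * exp (K * |B - A|) := by
  rcases le_total A B with hAB | hBA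
  · exact abs_intervalIntegral_le_of_abs_le_mul_exp_of_le hAB hK hC hg
  · have hneg : ∀ ξ ∈ uIcc (-A) (-B), |g (-ξ)| ≤ C * exp (K * |ξ - -A|) := by
      intro ξ hξ
      have hξ' : -ξ ∈ uIcc A B := by simpa using mem_image_of_mem Neg.neg hξ
      rw [show ξ - -A = -(-ξ - A) by ring, abs_neg]
      exact hg (-ξ) hξ'
    have := abs_intervalIntegral_le_of_abs_le_mul_exp_of_le (neg_le_neg hBA) hK hC hneg
    rwa [intervalIntegral.integral_comp_neg, neg_neg, neg_neg, intervalIntegral.integral_symm,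
      abs_neg, neg_sub_neg, abs_sub_comm] at this

theorem exists_isFixedPt_of_contracting_wrt {X : Type*} [MetricSpace X] [CompleteSpace X]
    [Nonempty X] {T : X → X} (δ : X → X → ℝ) {A B q : ℝ} (hq0 : 0 ≤ q) (hq : q < 1)
    (hδ : ∀ x y, δ x y ≤ A * dist x y) (hdist : ∀ x y, dist x y ≤ B * δ x y)
    (hB : 0 ≤ B) (hT : ∀ x y, δ (T x) (T y) ≤ q * δ x y) : ∃ x, IsFixedPt T x := by
  have hiter : ∀ k x y, δ (T^[k] x) (T^[k] y) ≤ q ^ k * δ x y := by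
    intro k
    induction k with
    | zero => simp
    | succ k ih =>
      intro x y
      rw [iterate_succ_apply', iterate_succ_apply', pow_succ', mul_assoc]
      exact (hT _ _).trans (mul_le_mul_of_nonneg_left (ih x y) hq0)
  obtain ⟨k, hk⟩ : ∃ k, B * q ^ k * A < 1 :=
    (((tendsto_pow_atTop_nhds_zero_of_lt_one hq0 hq).const_mul B).mul_const A).eventually
      (gt_mem_nhds (by simp)) |>.exists
  have hcontr : ContractingWith (B * q ^ k * A).toNNReal T^[k] := by
    refine ⟨Real.toNNReal_lt_one.2 hk, LipschitzWith.of_dist_le' fun x y => ?_⟩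
    calc dist (T^[k] x) (T^[k] y) ≤ B * (q ^ k * δ x y) :=
          (hdist _ _).trans (mul_le_mul_of_nonneg_left (hiter k x y) hB)
      _ ≤ B * (q ^ k * (A * dist x y)) := by gcongr; exact hδ x y
      _ = B * q ^ k * A * dist x y := by ring
  exact ⟨_, hcontr.isFixedPt_fixedPoint_iterate⟩

open Classical in
noncomputable def extendByZero {α ι β : Type*} [Zero β] {S : Set α} (w : S → ι → β) :
    ι → α → β :=
  fun i x => if hx : x ∈ S then w ⟨x, hx⟩ i else 0

theorem extendByZero_of_mem {α ι β : Type*} [Zero β] {S : Set α} {w : S → ι → β} {x : α}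
    (hx : x ∈ S) (i : ι) : extendByZero w i x = w ⟨x, hx⟩ i :=
  dif_pos hx

section Darboux

variable {n N : ℕ} {idx : Fin N → Fin n}
  {f : Fin N → (Fin n → ℝ) → (Fin N → ℝ) → ℝ} {φ : Fin N → (Fin n → ℝ) → ℝ}
  {xbar : Fin n → ℝ} {a b L M σ K : ℝ}
  {u v : Fin N → (Fin n → ℝ) → ℝ} {x : Fin n → ℝ}

theorem memDarbouxX.sum_abs_sub_le (hu : memDarbouxX n N φ xbar b σ u)
    (hv : memDarbouxX n N φ xbar b σ v) (hx : x ∈ l1ClosedBall xbar σ) :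
    ∑ h, |u h x - v h x| ≤ b :=
  calc ∑ h, |u h x - v h x| ≤ ∑ h, (|u h x - φ h x| + |v h x - φ h x|) :=
        Finset.sum_le_sum fun h _ => by
          simpa only [abs_sub_comm (φ h x)] using abs_sub_le (u h x) (φ h x) (v h x)
    _ ≤ b / 2 + b / 2 := by
        rw [Finset.sum_add_distrib]
        exact add_le_add (hu.2 x hx) (hv.2 x hx)
    _ = b := add_halves b

theorem memDarbouxX.apply_mem_l1ClosedBall (hσa : σ ≤ a)
    (hφosc : ∀ h x, x ∈ l1ClosedBall xbar a → |φ h x - φ h xbar| ≤ b / (2 * N))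
    (hu : memDarbouxX n N φ xbar b σ u) (hx : x ∈ l1ClosedBall xbar σ) :
    (fun m => u m x) ∈ l1ClosedBall (fun m => φ m xbar) b := by
  have hb : 0 ≤ b := by
    have := hu.2 x hx
    have : 0 ≤ ∑ h, |u h x - φ h x| := by positivity
    linarith
  have hosc : ∑ m, |φ m x - φ m xbar| ≤ b / 2 := by
    calc ∑ m, |φ m x - φ m xbar| ≤ N * (b / (2 * N)) := by
          simpa using Finset.sum_le_sum fun m (_ : m ∈ Finset.univ) =>
            hφosc m x (l1ClosedBall_subset_l1ClosedBall hσa hx)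
      _ ≤ b / 2 := by
          rcases N.eq_zero_or_pos with rfl | hN
          · simp only [Nat.cast_zero, zero_mul]
            linarith
          · exact (by field_simp : (N : ℝ) * (b / (2 * N)) = b / 2).le
  calc ∑ m, |u m x - φ m xbar| ≤ ∑ m, (|u m x - φ m x| + |φ m x - φ m xbar|) :=
        Finset.sum_le_sum fun m _ => abs_sub_le _ _ _
    _ ≤ b / 2 + b / 2 := by rw [Finset.sum_add_distrib]; exact add_le_add (hu.2 x hx) hosc
    _ = b := add_halves b

theorem memDarbouxX.continuousOn_integrand (hσa : σ ≤ a)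
    (hfc : ∀ h, ContinuousOn (fun p : (Fin n → ℝ) × (Fin N → ℝ) => f h p.1 p.2)
      (l1ClosedBall xbar a ×ˢ l1ClosedBall (fun m => φ m xbar) b))
    (hφosc : ∀ h x, x ∈ l1ClosedBall xbar a → |φ h x - φ h xbar| ≤ b / (2 * N))
    (hu : memDarbouxX n N φ xbar b σ u) (h : Fin N) :
    ContinuousOn (fun y => f h y (fun m => u m y)) (l1ClosedBall xbar σ) :=
  (hfc h).comp (continuousOn_id.prodMk hu.1) fun _ hy =>
    ⟨l1ClosedBall_subset_l1ClosedBall hσa hy, hu.apply_mem_l1ClosedBall hσa hφosc hy⟩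

theorem memDarbouxX.intervalIntegrable_integrand (hσa : σ ≤ a)
    (hfc : ∀ h, ContinuousOn (fun p : (Fin n → ℝ) × (Fin N → ℝ) => f h p.1 p.2)
      (l1ClosedBall xbar a ×ˢ l1ClosedBall (fun m => φ m xbar) b))
    (hφosc : ∀ h x, x ∈ l1ClosedBall xbar a → |φ h x - φ h xbar| ≤ b / (2 * N))
    (hu : memDarbouxX n N φ xbar b σ u) (hx : x ∈ l1ClosedBall xbar σ) (h : Fin N) :
    IntervalIntegrable (fun ξ => f h (update x (idx h) ξ) (fun m => u m (update x (idx h) ξ)))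
      volume (xbar (idx h)) (x (idx h)) :=
  ((hu.continuousOn_integrand hσa hfc hφosc h).comp
    (continuous_const.update (idx h) continuous_id).continuousOn
    fun _ hξ => update_mem_l1ClosedBall hx hξ).intervalIntegrable

theorem memDarbouxX.continuousOn_darbouxPhi (hσa : σ ≤ a)
    (hfc : ∀ h, ContinuousOn (fun p : (Fin n → ℝ) × (Fin N → ℝ) => f h p.1 p.2)
      (l1ClosedBall xbar a ×ˢ l1ClosedBall (fun m => φ m xbar) b))
    (hφc : ∀ h, ContinuousOn (φ h) (l1ClosedBall xbar a))
    (hφosc : ∀ h x, x ∈ l1ClosedBall xbar a → |φ h x - φ h xbar| ≤ b / (2 * N))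
    (hu : memDarbouxX n N φ xbar b σ u) :
    ContinuousOn (fun x h => darbouxPhi n N idx f φ xbar u h x) (l1ClosedBall xbar σ) :=
  continuousOn_pi.2 fun h => ((hφc h).mono (l1ClosedBall_subset_l1ClosedBall hσa)).add <|
    continuousOn_intervalIntegral_update isClosed_l1ClosedBall
      (hu.continuousOn_integrand hσa hfc hφosc h) (idx h) (xbar (idx h))
      fun _ hx _ hξ => update_mem_l1ClosedBall hx hξ

theorem memDarbouxX.sum_abs_darbouxPhi_sub_le (hσa : σ ≤ a)
    (hφosc : ∀ h x, x ∈ l1ClosedBall xbar a → |φ h x - φ h xbar| ≤ b / (2 * N))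
    (hMb : ∀ h x u, x ∈ l1ClosedBall xbar a → u ∈ l1ClosedBall (fun m => φ m xbar) b →
      |f h x u| ≤ M)
    (hσM : M * N * σ ≤ b / 2) (hu : memDarbouxX n N φ xbar b σ u)
    (hx : x ∈ l1ClosedBall xbar σ) :
    ∑ h, |darbouxPhi n N idx f φ xbar u h x - φ h x| ≤ b / 2 := by
  have hfM : ∀ h, ∀ y ∈ l1ClosedBall xbar σ, |f h y (fun m => u m y)| ≤ M := fun h y hy =>
    hMb h y _ (l1ClosedBall_subset_l1ClosedBall hσa hy) (hu.apply_mem_l1ClosedBall hσa hφosc hy)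
  have hcomp : ∀ h, |darbouxPhi n N idx f φ xbar u h x - φ h x| ≤ M * σ := fun h => by
    have hM : 0 ≤ M := (abs_nonneg _).trans (hfM h x hx)
    rw [darbouxPhi, add_sub_cancel_left, ← Real.norm_eq_abs]
    refine (intervalIntegral.norm_integral_le_of_norm_le_const fun ξ hξ => ?_).trans
      (mul_le_mul_of_nonneg_left (abs_sub_le_of_mem_l1ClosedBall hx (idx h)) hM)
    exact hfM h _ (update_mem_l1ClosedBall hx (uIoc_subset_uIcc hξ))
  calc ∑ h, |darbouxPhi n N idx f φ xbar u h x - φ h x| ≤ N * (M * σ) := by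
        simpa using Finset.sum_le_sum fun h (_ : h ∈ Finset.univ) => hcomp h
    _ ≤ b / 2 := by linarith

theorem memDarbouxX_darbouxPhi (hσa : σ ≤ a)
    (hfc : ∀ h, ContinuousOn (fun p : (Fin n → ℝ) × (Fin N → ℝ) => f h p.1 p.2)
      (l1ClosedBall xbar a ×ˢ l1ClosedBall (fun m => φ m xbar) b))
    (hφc : ∀ h, ContinuousOn (φ h) (l1ClosedBall xbar a))
    (hφosc : ∀ h x, x ∈ l1ClosedBall xbar a → |φ h x - φ h xbar| ≤ b / (2 * N))
    (hMb : ∀ h x u, x ∈ l1ClosedBall xbar a → u ∈ l1ClosedBall (fun m => φ m xbar) b →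
      |f h x u| ≤ M)
    (hσM : M * N * σ ≤ b / 2) (hu : memDarbouxX n N φ xbar b σ u) :
    memDarbouxX n N φ xbar b σ (darbouxPhi n N idx f φ xbar u) :=
  ⟨hu.continuousOn_darbouxPhi hσa hfc hφc hφosc,
    fun _ hx => hu.sum_abs_darbouxPhi_sub_le hσa hφosc hMb hσM hx⟩

theorem darbouxDist_nonneg : 0 ≤ darbouxDist n N xbar σ K u v :=
  Real.sSup_nonneg <| by rintro _ ⟨x, -, rfl⟩; positivity

theorem darbouxDist_le {r : ℝ} (hr : 0 ≤ r)
    (h : ∀ x ∈ l1ClosedBall xbar σ,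
      ∑ h, |u h x - v h x| ≤ exp (K * ∑ j, |x j - xbar j|) * r) :
    darbouxDist n N xbar σ K u v ≤ r := by
  refine Real.sSup_le ?_ hr
  rintro _ ⟨x, hx, rfl⟩
  dsimp only
  rw [exp_neg, inv_mul_le_iff₀ (exp_pos _)]
  exact h x hx

theorem sum_abs_sub_le_exp_mul_darbouxDist (hK : 0 ≤ K) {C : ℝ}
    (hC : ∀ x ∈ l1ClosedBall xbar σ, ∑ h, |u h x - v h x| ≤ C)
    (hx : x ∈ l1ClosedBall xbar σ) :
    ∑ h, |u h x - v h x| ≤ exp (K * ∑ j, |x j - xbar j|) * darbouxDist n N xbar σ K u v := by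
  have hbdd : BddAbove ((fun x : Fin n → ℝ =>
      exp (-(K * ∑ j, |x j - xbar j|)) * ∑ h, |u h x - v h x|) '' l1ClosedBall xbar σ) := by
    refine ⟨C, ?_⟩
    rintro _ ⟨y, hy, rfl⟩
    refine (mul_le_of_le_one_left (by positivity) (exp_le_one_iff.2 ?_)).trans (hC y hy)
    exact neg_nonpos.2 (by positivity)
  rw [← inv_mul_le_iff₀ (exp_pos _), ← exp_neg]
  exact le_csSup hbdd (mem_image_of_mem _ hx)

theorem darbouxDist_congr {u' v' : Fin N → (Fin n → ℝ) → ℝ}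
    (hu : ∀ x ∈ l1ClosedBall xbar σ, ∀ h, u h x = u' h x)
    (hv : ∀ x ∈ l1ClosedBall xbar σ, ∀ h, v h x = v' h x) :
    darbouxDist n N xbar σ K u v = darbouxDist n N xbar σ K u' v' := by
  unfold darbouxDist
  congr 1
  refine image_congr fun x hx => ?_
  simp only [hu x hx, hv x hx]

theorem memDarbouxX.abs_darbouxPhi_sub_darbouxPhi_le (hK : 0 < K) (hL : 0 ≤ L) (hσa : σ ≤ a)
    (hfc : ∀ h, ContinuousOn (fun p : (Fin n → ℝ) × (Fin N → ℝ) => f h p.1 p.2)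
      (l1ClosedBall xbar a ×ˢ l1ClosedBall (fun m => φ m xbar) b))
    (hfL : ∀ h x u v, x ∈ l1ClosedBall xbar a → u ∈ l1ClosedBall (fun m => φ m xbar) b →
      v ∈ l1ClosedBall (fun m => φ m xbar) b → |f h x u - f h x v| ≤ L * ∑ m, |u m - v m|)
    (hφosc : ∀ h x, x ∈ l1ClosedBall xbar a → |φ h x - φ h xbar| ≤ b / (2 * N))
    (hu : memDarbouxX n N φ xbar b σ u) (hv : memDarbouxX n N φ xbar b σ v)
    (hx : x ∈ l1ClosedBall xbar σ) (h : Fin N) :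
    |darbouxPhi n N idx f φ xbar u h x - darbouxPhi n N idx f φ xbar v h x|
      ≤ L / K * exp (K * ∑ j, |x j - xbar j|) * darbouxDist n N xbar σ K u v := by
  set i := idx h
  set d := darbouxDist n N xbar σ K u v
  have hpath : ∀ ξ ∈ uIcc (xbar i) (x i), update x i ξ ∈ l1ClosedBall xbar σ :=
    fun _ hξ => update_mem_l1ClosedBall hx hξ
  have hbound : ∀ ξ ∈ uIcc (xbar i) (x i),
      |f h (update x i ξ) (fun m => u m (update x i ξ)) -
        f h (update x i ξ) (fun m => v m (update x i ξ))|
      ≤ L * d * exp (K * (∑ j, |x j - xbar j| - |x i - xbar i|)) * exp (K * |ξ - xbar i|) := by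
    intro ξ hξ
    have hy := hpath ξ hξ
    calc _ ≤ L * ∑ m, |u m (update x i ξ) - v m (update x i ξ)| :=
          hfL h _ _ _ (l1ClosedBall_subset_l1ClosedBall hσa hy)
            (hu.apply_mem_l1ClosedBall hσa hφosc hy) (hv.apply_mem_l1ClosedBall hσa hφosc hy)
      _ ≤ L * (exp (K * ∑ j, |update x i ξ j - xbar j|) * d) :=
          mul_le_mul_of_nonneg_left (sum_abs_sub_le_exp_mul_darbouxDist hK.le
            (fun _ hy => hu.sum_abs_sub_le hv hy) hy) hL
      _ = _ := by
        rw [sum_abs_update_sub, mul_add, exp_add]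
        ring_nf
  calc |darbouxPhi n N idx f φ xbar u h x - darbouxPhi n N idx f φ xbar v h x|
      = |∫ ξ in xbar i..x i, (f h (update x i ξ) (fun m => u m (update x i ξ)) -
          f h (update x i ξ) (fun m => v m (update x i ξ)))| := by
        rw [intervalIntegral.integral_sub (hu.intervalIntegrable_integrand hσa hfc hφosc hx h)
          (hv.intervalIntegrable_integrand hσa hfc hφosc hx h)]
        simp only [darbouxPhi, add_sub_add_left_eq_sub]
    _ ≤ L * d * exp (K * (∑ j, |x j - xbar j| - |x i - xbar i|)) / K *
          exp (K * |x i - xbar i|) :=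
        abs_intervalIntegral_le_of_abs_le_mul_exp hK
          (mul_nonneg (mul_nonneg hL darbouxDist_nonneg) (exp_pos _).le) hbound
    _ = L / K * exp (K * ∑ j, |x j - xbar j|) * d := by
        rw [div_mul_eq_mul_div, mul_assoc (L * d), ← exp_add]
        ring_nf

theorem darbouxDist_darbouxPhi_le (hL : 0 ≤ L) (hσa : σ ≤ a)
    (hfc : ∀ h, ContinuousOn (fun p : (Fin n → ℝ) × (Fin N → ℝ) => f h p.1 p.2)
      (l1ClosedBall xbar a ×ˢ l1ClosedBall (fun m => φ m xbar) b))
    (hfL : ∀ h x u v, x ∈ l1ClosedBall xbar a → u ∈ l1ClosedBall (fun m => φ m xbar) b →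
      v ∈ l1ClosedBall (fun m => φ m xbar) b → |f h x u - f h x v| ≤ L * ∑ m, |u m - v m|)
    (hφosc : ∀ h x, x ∈ l1ClosedBall xbar a → |φ h x - φ h xbar| ≤ b / (2 * N))
    (hu : memDarbouxX n N φ xbar b σ u) (hv : memDarbouxX n N φ xbar b σ v) :
    darbouxDist n N xbar σ (2 * L * N)
        (darbouxPhi n N idx f φ xbar u) (darbouxPhi n N idx f φ xbar v)
      ≤ 1 / 2 * darbouxDist n N xbar σ (2 * L * N) u v := by
  have hcomp := fun K (hK : 0 < K) x (hx : x ∈ l1ClosedBall xbar σ) (h : Fin N) =>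
    hu.abs_darbouxPhi_sub_darbouxPhi_le (idx := idx) hK hL hσa hfc hfL hφosc hv hx h
  refine darbouxDist_le (mul_nonneg (by norm_num) darbouxDist_nonneg) fun x hx => ?_
  rcases (show 0 ≤ 2 * L * N by positivity).eq_or_lt with hK | hK
  · -- here `N * L = 0`, so the estimate with weight `1` in place of `2 * L * N` gives `0`
    have hNL : (N : ℝ) * L = 0 := by linarith
    calc ∑ h, |darbouxPhi n N idx f φ xbar u h x - darbouxPhi n N idx f φ xbar v h x|
        ≤ ∑ _h : Fin N,
            L / 1 * exp (1 * ∑ j, |x j - xbar j|) * darbouxDist n N xbar σ 1 u v :=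
          Finset.sum_le_sum fun h _ => hcomp 1 one_pos x hx h
      _ = N * L * (exp (∑ j, |x j - xbar j|) * darbouxDist n N xbar σ 1 u v) := by
          simp only [Finset.sum_const, Finset.card_univ, Fintype.card_fin, nsmul_eq_mul, div_one,
            one_mul]
          ring
      _ ≤ _ := by
          rw [hNL, zero_mul]
          exact mul_nonneg (exp_pos _).le (mul_nonneg (by norm_num) darbouxDist_nonneg)
  · calc ∑ h, |darbouxPhi n N idx f φ xbar u h x - darbouxPhi n N idx f φ xbar v h x|
        ≤ ∑ _h : Fin N, L / (2 * L * N) * exp (2 * L * N * ∑ j, |x j - xbar j|) *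
            darbouxDist n N xbar σ (2 * L * N) u v :=
          Finset.sum_le_sum fun h _ => hcomp _ hK x hx h
      _ = _ := by
          have hN : (N : ℝ) ≠ 0 := by rintro hN; simp [hN] at hK
          have hL : L ≠ 0 := by rintro rfl; simp at hK
          simp only [Finset.sum_const, Finset.card_univ, Fintype.card_fin, nsmul_eq_mul]
          field_simp

/-- The space `X`, restricted to `B_σ(xbar)`, as a subset of `C(B_σ(xbar), ℝ^N)` with its sup
metric. -/
def darbouxSpace (φ : Fin N → (Fin n → ℝ) → ℝ) (xbar : Fin n → ℝ) (b σ : ℝ) :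
    Set C(l1ClosedBall xbar σ, Fin N → ℝ) :=
  {w | ∀ x, ∑ h, |w x h - φ h x| ≤ b / 2}

theorem isClosed_darbouxSpace : IsClosed (darbouxSpace φ xbar b σ) := by
  simp only [darbouxSpace, ofPred_forall]
  exact isClosed_iInter fun x => isClosed_le (by fun_prop) continuous_const

theorem memDarbouxX_extendByZero {w : C(l1ClosedBall xbar σ, Fin N → ℝ)}
    (hw : w ∈ darbouxSpace φ xbar b σ) : memDarbouxX n N φ xbar b σ (extendByZero ⇑w) := by
  have hrestrict : (l1ClosedBall xbar σ).domRestrict (fun x h => extendByZero ⇑w h x) = ⇑w :=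
    funext fun x => funext fun h => extendByZero_of_mem x.2 h
  have hcont : ContinuousOn (fun x h => extendByZero ⇑w h x) (l1ClosedBall xbar σ) :=
    continuousOn_iff_continuous_domRestrict.2 (by rw [hrestrict]; exact w.continuous)
  refine ⟨hcont, fun x hx => ?_⟩
  have hx : x ∈ l1ClosedBall xbar σ := hx
  simpa only [extendByZero_of_mem hx] using hw ⟨x, hx⟩

def memDarbouxX.toDarbouxSpace (hu : memDarbouxX n N φ xbar b σ u) : darbouxSpace φ xbar b σ :=
  ⟨⟨(l1ClosedBall xbar σ).domRestrict fun x h => u h x, hu.1.domRestrict⟩,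
    fun x => hu.2 x x.2⟩

theorem darbouxDist_extendByZero_le (hK : 0 ≤ K) (w w' : C(l1ClosedBall xbar σ, Fin N → ℝ)) :
    darbouxDist n N xbar σ K (extendByZero ⇑w) (extendByZero ⇑w') ≤ N * dist w w' := by
  refine darbouxDist_le (by positivity) fun x hx => ?_
  simp only [extendByZero_of_mem hx]
  calc ∑ h, |w ⟨x, hx⟩ h - w' ⟨x, hx⟩ h| ≤ ∑ _h : Fin N, dist w w' :=
        Finset.sum_le_sum fun h _ => by
          rw [← Real.dist_eq]
          exact (dist_le_pi_dist _ _ h).trans (ContinuousMap.dist_apply_le_dist _)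
    _ = N * dist w w' := by simp
    _ ≤ exp (K * ∑ j, |x j - xbar j|) * (N * dist w w') :=
        le_mul_of_one_le_left (by positivity) (one_le_exp (by positivity))

theorem dist_le_exp_mul_darbouxDist (hK : 0 ≤ K) {w w' : C(l1ClosedBall xbar σ, Fin N → ℝ)}
    (hw : w ∈ darbouxSpace φ xbar b σ) (hw' : w' ∈ darbouxSpace φ xbar b σ) :
    dist w w' ≤
      exp (K * σ) * darbouxDist n N xbar σ K (extendByZero ⇑w) (extendByZero ⇑w') := by
  have hd :
      0 ≤ exp (K * σ) * darbouxDist n N xbar σ K (extendByZero ⇑w) (extendByZero ⇑w') :=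
    mul_nonneg (exp_pos _).le darbouxDist_nonneg
  refine (ContinuousMap.dist_le hd).2 fun x => (dist_pi_le_iff hd).2 fun h => ?_
  have hx : (x : Fin n → ℝ) ∈ l1ClosedBall xbar σ := x.2
  calc dist (w x h) (w' x h) = |extendByZero w h x - extendByZero w' h x| := by
        rw [extendByZero_of_mem hx, extendByZero_of_mem hx, Real.dist_eq]
    _ ≤ ∑ m, |extendByZero w m x - extendByZero w' m x| :=
        Finset.single_le_sum (f := fun m => |extendByZero w m x - extendByZero w' m x|)
          (fun _ _ => abs_nonneg _) (Finset.mem_univ h)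
    _ ≤ exp (K * ∑ j, |(x : Fin n → ℝ) j - xbar j|) *
          darbouxDist n N xbar σ K (extendByZero ⇑w) (extendByZero ⇑w') :=
        sum_abs_sub_le_exp_mul_darbouxDist hK (fun _ hy =>
          (memDarbouxX_extendByZero hw).sum_abs_sub_le (memDarbouxX_extendByZero hw') hy) hx
    _ ≤ exp (K * σ) * darbouxDist n N xbar σ K (extendByZero ⇑w) (extendByZero ⇑w') :=
        mul_le_mul_of_nonneg_right (exp_le_exp.2 (mul_le_mul_of_nonneg_left hx hK))
          darbouxDist_nonneg

theorem exists_memDarbouxX_darbouxPhi_eq_self (hb : 0 ≤ b) (hL : 0 ≤ L) (hσa : σ ≤ a)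
    (hfc : ∀ h, ContinuousOn (fun p : (Fin n → ℝ) × (Fin N → ℝ) => f h p.1 p.2)
      (l1ClosedBall xbar a ×ˢ l1ClosedBall (fun m => φ m xbar) b))
    (hfL : ∀ h x u v, x ∈ l1ClosedBall xbar a → u ∈ l1ClosedBall (fun m => φ m xbar) b →
      v ∈ l1ClosedBall (fun m => φ m xbar) b → |f h x u - f h x v| ≤ L * ∑ m, |u m - v m|)
    (hφc : ∀ h, ContinuousOn (φ h) (l1ClosedBall xbar a))
    (hφosc : ∀ h x, x ∈ l1ClosedBall xbar a → |φ h x - φ h xbar| ≤ b / (2 * N))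
    (hMb : ∀ h x u, x ∈ l1ClosedBall xbar a → u ∈ l1ClosedBall (fun m => φ m xbar) b →
      |f h x u| ≤ M)
    (hσM : M * N * σ ≤ b / 2) :
    ∃ u, memDarbouxX n N φ xbar b σ u ∧
      ∀ x ∈ l1ClosedBall xbar σ, ∀ h, darbouxPhi n N idx f φ xbar u h x = u h x := by
  have hK : 0 ≤ 2 * L * N := by positivity
  have hφ : memDarbouxX n N φ xbar b σ φ :=
    ⟨continuousOn_pi.2 fun h => (hφc h).mono (l1ClosedBall_subset_l1ClosedBall hσa),
      fun x _ => by simp only [sub_self, abs_zero, Finset.sum_const_zero]; positivity⟩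
  have : CompleteSpace (darbouxSpace φ xbar b σ) := isClosed_darbouxSpace.completeSpace_coe
  have : Nonempty (darbouxSpace φ xbar b σ) := ⟨hφ.toDarbouxSpace⟩
  let T (w : darbouxSpace φ xbar b σ) : darbouxSpace φ xbar b σ :=
    (memDarbouxX_darbouxPhi (idx := idx) hσa hfc hφc hφosc hMb hσM
      (memDarbouxX_extendByZero w.2)).toDarbouxSpace
  have hT : ∀ w, ∀ x ∈ l1ClosedBall xbar σ, ∀ h, extendByZero ⇑(T w).1 h x =
      darbouxPhi n N idx f φ xbar (extendByZero ⇑w.1) h x :=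
    fun _ _ hx h => extendByZero_of_mem hx h
  obtain ⟨w, hw⟩ := exists_isFixedPt_of_contracting_wrt (T := T)
    (fun w w' => darbouxDist n N xbar σ (2 * L * N) (extendByZero ⇑w.1) (extendByZero ⇑w'.1))
    (by norm_num : (0 : ℝ) ≤ 1 / 2) (by norm_num)
    (fun w w' => darbouxDist_extendByZero_le hK _ _)
    (fun w w' => dist_le_exp_mul_darbouxDist hK w.2 w'.2) (exp_pos _).le fun w w' => by
      rw [darbouxDist_congr (hT w) (hT w')]
      exact darbouxDist_darbouxPhi_le hL hσa hfc hfL hφosc (memDarbouxX_extendByZero w.2)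
        (memDarbouxX_extendByZero w'.2)
  refine ⟨extendByZero ⇑w.1, memDarbouxX_extendByZero w.2, fun x hx h => ?_⟩
  rw [← hT w x hx h, hw]

theorem memDarbouxX.eq_of_darbouxDist_nonpos (hK : 0 ≤ K) {v : Fin N → (Fin n → ℝ) → ℝ}
    (hu : memDarbouxX n N φ xbar b σ u) (hv : memDarbouxX n N φ xbar b σ v)
    (hd : darbouxDist n N xbar σ K u v ≤ 0) {x : Fin n → ℝ} (hx : x ∈ l1ClosedBall xbar σ)
    (h : Fin N) : u h x = v h x := by
  have hsum := (sum_abs_sub_le_exp_mul_darbouxDist hK (fun _ hy => hu.sum_abs_sub_le hv hy)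
    hx).trans (mul_nonpos_of_nonneg_of_nonpos (exp_pos _).le hd)
  have := (Finset.single_le_sum (f := fun m => |u m x - v m x|) (fun _ _ => abs_nonneg _)
    (Finset.mem_univ h)).trans hsum
  exact sub_eq_zero.1 (abs_nonpos_iff.1 this)

end Darboux

theorem darboux_first_picard_contraction_general (n N : ℕ) (idx : Fin N → Fin n)
    (f : Fin N → (Fin n → ℝ) → (Fin N → ℝ) → ℝ)
    (φ : Fin N → (Fin n → ℝ) → ℝ)
    (xbar : Fin n → ℝ) (a b L M σ : ℝ)
    (hb : 0 < b) (hL : 0 ≤ L)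
    (hfc : ∀ h, ContinuousOn (fun p : (Fin n → ℝ) × (Fin N → ℝ) => f h p.1 p.2)
      ({x : Fin n → ℝ | ∑ j, |x j - xbar j| ≤ a} ×ˢ
       {v : Fin N → ℝ | ∑ m, |v m - φ m xbar| ≤ b}))
    (hfL : ∀ h x u v, (∑ j, |x j - xbar j| ≤ a) → (∑ m, |u m - φ m xbar| ≤ b) →
      (∑ m, |v m - φ m xbar| ≤ b) → |f h x u - f h x v| ≤ L * ∑ m, |u m - v m|)
    (hφc : ∀ h, ContinuousOn (φ h) {x : Fin n → ℝ | ∑ j, |x j - xbar j| ≤ a})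
    (hφosc : ∀ h x, (∑ j, |x j - xbar j| ≤ a) → |φ h x - φ h xbar| ≤ b / (2 * N))
    (hMb : ∀ h x u, (∑ j, |x j - xbar j| ≤ a) → (∑ m, |u m - φ m xbar| ≤ b) →
      |f h x u| ≤ M)
    (hσa : σ ≤ a) (hσM : M * N * σ ≤ b / 2) :
    (∀ u v : Fin N → (Fin n → ℝ) → ℝ,
      memDarbouxX n N φ xbar b σ u → memDarbouxX n N φ xbar b σ v →
      darbouxDist n N xbar σ (2 * L * N)
          (darbouxPhi n N idx f φ xbar u) (darbouxPhi n N idx f φ xbar v)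
        ≤ (1 / 2) * darbouxDist n N xbar σ (2 * L * N) u v) ∧
    (∃ u : Fin N → (Fin n → ℝ) → ℝ, memDarbouxX n N φ xbar b σ u ∧
      ∀ x : Fin n → ℝ, (∑ j, |x j - xbar j| ≤ σ) → ∀ h,
        darbouxPhi n N idx f φ xbar u h x = u h x) ∧
    (∀ u v : Fin N → (Fin n → ℝ) → ℝ,
      memDarbouxX n N φ xbar b σ u → memDarbouxX n N φ xbar b σ v →
      (∀ x : Fin n → ℝ, (∑ j, |x j - xbar j| ≤ σ) → ∀ h,
        darbouxPhi n N idx f φ xbar u h x = u h x) →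
      (∀ x : Fin n → ℝ, (∑ j, |x j - xbar j| ≤ σ) → ∀ h,
        darbouxPhi n N idx f φ xbar v h x = v h x) →
      ∀ x : Fin n → ℝ, (∑ j, |x j - xbar j| ≤ σ) → ∀ h, u h x = v h x) := by
  have contraction : ∀ u v, memDarbouxX n N φ xbar b σ u → memDarbouxX n N φ xbar b σ v →
      darbouxDist n N xbar σ (2 * L * N)
          (darbouxPhi n N idx f φ xbar u) (darbouxPhi n N idx f φ xbar v)
        ≤ 1 / 2 * darbouxDist n N xbar σ (2 * L * N) u v :=
    fun _ _ hu hv => darbouxDist_darbouxPhi_le hL hσa hfc hfL hφosc hu hv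
  refine ⟨contraction,
    exists_memDarbouxX_darbouxPhi_eq_self hb.le hL hσa hfc hfL hφc hφosc hMb hσM, ?_⟩
  intro u v hu hv hufix hvfix x hx h
  refine hu.eq_of_darbouxDist_nonpos (K := 2 * L * N) (by positivity) hv ?_ hx h
  have hd := contraction u v hu hv
  rw [darbouxDist_congr hufix hvfix] at hd
  linarith [darbouxDist_nonneg (xbar := xbar) (σ := σ) (K := 2 * L * N) (u := u) (v := v)]

/-- With the weighted metric `d` (weight `e^{-K|x-xbar|₁}`, `K = 2LN`), the map `Φ`
is a strict `1/2`-contraction on `X`; hence it has a unique fixed point (unique up to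
equality on `B_σ(xbar)`). -/
theorem darboux_first_picard_contraction (n N : ℕ) (idx : Fin N → Fin n)
    (f : Fin N → (Fin n → ℝ) → (Fin N → ℝ) → ℝ)
    (φ : Fin N → (Fin n → ℝ) → ℝ)
    (xbar : Fin n → ℝ) (a b L M σ : ℝ)
    (ha : 0 < a) (hb : 0 < b) (hL : 0 ≤ L)
    (hφind : ∀ h x t, φ h (Function.update x (idx h) t) = φ h x)
    (hfc : ∀ h, ContinuousOn (fun p : (Fin n → ℝ) × (Fin N → ℝ) => f h p.1 p.2)
      ({x : Fin n → ℝ | ∑ j, |x j - xbar j| ≤ a} ×ˢ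
       {v : Fin N → ℝ | ∑ m, |v m - φ m xbar| ≤ b}))
    (hfL : ∀ h x u v, (∑ j, |x j - xbar j| ≤ a) → (∑ m, |u m - φ m xbar| ≤ b) →
      (∑ m, |v m - φ m xbar| ≤ b) → |f h x u - f h x v| ≤ L * ∑ m, |u m - v m|)
    (hφc : ∀ h, ContinuousOn (φ h) {x : Fin n → ℝ | ∑ j, |x j - xbar j| ≤ a})
    (hφosc : ∀ h x, (∑ j, |x j - xbar j| ≤ a) → |φ h x - φ h xbar| ≤ b / (2 * N))
    (hMb : ∀ h x u, (∑ j, |x j - xbar j| ≤ a) → (∑ m, |u m - φ m xbar| ≤ b) →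
      |f h x u| ≤ M)
    (hσ : 0 < σ) (hσa : σ ≤ a) (hσM : M * N * σ ≤ b / 2) :
    (∀ u v : Fin N → (Fin n → ℝ) → ℝ,
      memDarbouxX n N φ xbar b σ u → memDarbouxX n N φ xbar b σ v →
      darbouxDist n N xbar σ (2 * L * N)
          (darbouxPhi n N idx f φ xbar u) (darbouxPhi n N idx f φ xbar v)
        ≤ (1 / 2) * darbouxDist n N xbar σ (2 * L * N) u v) ∧
    (∃ u : Fin N → (Fin n → ℝ) → ℝ, memDarbouxX n N φ xbar b σ u ∧
      ∀ x : Fin n → ℝ, (∑ j, |x j - xbar j| ≤ σ) → ∀ h,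
        darbouxPhi n N idx f φ xbar u h x = u h x) ∧
    (∀ u v : Fin N → (Fin n → ℝ) → ℝ,
      memDarbouxX n N φ xbar b σ u → memDarbouxX n N φ xbar b σ v →
      (∀ x : Fin n → ℝ, (∑ j, |x j - xbar j| ≤ σ) → ∀ h,
        darbouxPhi n N idx f φ xbar u h x = u h x) →
      (∀ x : Fin n → ℝ, (∑ j, |x j - xbar j| ≤ σ) → ∀ h,
        darbouxPhi n N idx f φ xbar v h x = v h x) →
      ∀ x : Fin n → ℝ, (∑ j, |x j - xbar j| ≤ σ) → ∀ h, u h x = v h x) :=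
  darboux_first_picard_contraction_general n N idx f φ xbar a b L M σ hb hL hfc hfL hφc hφosc hMb
    hσa hσM
end

section
/- Suppose the determined system ∂u_{ih}/∂x_i = f_{ih}(x,u) with Lipschitz-in-u continuous right-hand sides admits two C¹ solutions u, v on B_σ(x̄) taking the same continuous data φ_{ih} on the hyperplanes {x_i = x̄_i}. Then u ≡ v on B_σ(x̄). -/
open Set Function

/-- Uniqueness part of Darboux's first theorem: two C¹ solutions of the determined
system `∂u_{ih}/∂x_i = f_{ih}(x,u)` on `B_σ(xbar)`, both with values in `B_b(φbar)`
(where the right-hand sides are continuous and `L`-Lipschitz in `u`, ℓ¹ norms) and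
taking the same continuous data `φ_{ih}` on the hyperplanes `{x_i = xbar_i}`,
coincide on `B_σ(xbar)`. -/
theorem darboux_first_uniqueness (n N : ℕ) (idx : Fin N → Fin n)
    (f : Fin N → (Fin n → ℝ) → (Fin N → ℝ) → ℝ)
    (φ : Fin N → (Fin n → ℝ) → ℝ)
    (xbar : Fin n → ℝ) (a b L σ : ℝ)
    (ha : 0 < a) (hb : 0 < b) (hL : 0 ≤ L)
    (hφind : ∀ h x t, φ h (Function.update x (idx h) t) = φ h x)
    (hfc : ∀ h, ContinuousOn (fun p : (Fin n → ℝ) × (Fin N → ℝ) => f h p.1 p.2)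
      ({x : Fin n → ℝ | ∑ j, |x j - xbar j| ≤ a} ×ˢ
       {v : Fin N → ℝ | ∑ m, |v m - φ m xbar| ≤ b}))
    (hfL : ∀ h x u v, (∑ j, |x j - xbar j| ≤ a) → (∑ m, |u m - φ m xbar| ≤ b) →
      (∑ m, |v m - φ m xbar| ≤ b) → |f h x u - f h x v| ≤ L * ∑ m, |u m - v m|)
    (hφc : ∀ h, ContinuousOn (φ h) {x : Fin n → ℝ | ∑ j, |x j - xbar j| ≤ a})
    (hσ : 0 < σ) (hσa : σ ≤ a)
    (u v : Fin N → (Fin n → ℝ) → ℝ)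
    (hu : ContDiffOn ℝ 1 (fun x h => u h x) {x : Fin n → ℝ | ∑ j, |x j - xbar j| ≤ σ})
    (hv : ContDiffOn ℝ 1 (fun x h => v h x) {x : Fin n → ℝ | ∑ j, |x j - xbar j| ≤ σ})
    (hurange : ∀ x : Fin n → ℝ, (∑ j, |x j - xbar j| ≤ σ) →
      ∑ m, |u m x - φ m xbar| ≤ b)
    (hvrange : ∀ x : Fin n → ℝ, (∑ j, |x j - xbar j| ≤ σ) →
      ∑ m, |v m x - φ m xbar| ≤ b)
    (hupde : ∀ x : Fin n → ℝ, (∑ j, |x j - xbar j| ≤ σ) → ∀ h,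
      HasDerivWithinAt (fun t => u h (Function.update x (idx h) t))
        (f h x (fun m => u m x))
        {t : ℝ | ∑ j, |Function.update x (idx h) t j - xbar j| ≤ σ} (x (idx h)))
    (hvpde : ∀ x : Fin n → ℝ, (∑ j, |x j - xbar j| ≤ σ) → ∀ h,
      HasDerivWithinAt (fun t => v h (Function.update x (idx h) t))
        (f h x (fun m => v m x))
        {t : ℝ | ∑ j, |Function.update x (idx h) t j - xbar j| ≤ σ} (x (idx h)))
    (hudata : ∀ x : Fin n → ℝ, (∑ j, |x j - xbar j| ≤ σ) → ∀ h,
      x (idx h) = xbar (idx h) → u h x = φ h x)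
    (hvdata : ∀ x : Fin n → ℝ, (∑ j, |x j - xbar j| ≤ σ) → ∀ h,
      x (idx h) = xbar (idx h) → v h x = φ h x) :
    ∀ x : Fin n → ℝ, (∑ j, |x j - xbar j| ≤ σ) → ∀ h, u h x = v h x := by
  classical
  set δ : ℝ := 1 / (2 * (L + 1) * (N + 1)) with hδdef
  have hδpos : 0 < δ := by rw [hδdef]; positivity
  have hNcast : (0:ℝ) ≤ (N:ℝ) := Nat.cast_nonneg N
  have hNLδ : (N : ℝ) * L * δ ≤ 1 / 2 := by
    rw [hδdef, mul_one_div, div_le_div_iff₀ (by positivity) (by norm_num)]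
    nlinarith
  have habs_le : ∀ (x : Fin n → ℝ) (j : Fin n), |x j - xbar j| ≤ ∑ j', |x j' - xbar j'| :=
    fun x j => Finset.single_le_sum (f := fun j' => |x j' - xbar j'|) (fun j' _ => abs_nonneg _) (Finset.mem_univ j)
  have hwabs_le : ∀ (x : Fin n → ℝ) (m : Fin N), |u m x - v m x| ≤ ∑ m', |u m' x - v m' x| :=
    fun x m => Finset.single_le_sum (f := fun m' => |u m' x - v m' x|) (fun m' _ => abs_nonneg _) (Finset.mem_univ m)
  have hwnonneg : ∀ x : Fin n → ℝ, (0:ℝ) ≤ ∑ m, |u m x - v m x| :=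
    fun x => Finset.sum_nonneg fun m _ => abs_nonneg _
  have hsplit : ∀ (x : Fin n → ℝ) (i : Fin n),
      ∑ j, |x j - xbar j| = |x i - xbar i| + ∑ j ∈ Finset.univ.erase i, |x j - xbar j| :=
    fun x i => (Finset.add_sum_erase _ _ (Finset.mem_univ i)).symm
  have hupdate_sum : ∀ (x : Fin n → ℝ) (i : Fin n) (t : ℝ),
      ∑ j, |Function.update x i t j - xbar j|
        = |t - xbar i| + ∑ j ∈ Finset.univ.erase i, |x j - xbar j| := by
    intro x i t
    rw [hsplit (Function.update x i t) i, Function.update_self]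
    congr 1
    refine Finset.sum_congr rfl fun j hj => ?_
    rw [Function.update_of_ne (Finset.ne_of_mem_erase hj)]
  have hKcompact : ∀ ρ : ℝ, IsCompact {x : Fin n → ℝ | ∑ j, |x j - xbar j| ≤ ρ} := by
    intro ρ
    have hcont : Continuous fun x : Fin n → ℝ => ∑ j, |x j - xbar j| :=
      continuous_finset_sum _ fun j _ => ((continuous_apply j).sub continuous_const).abs
    refine Metric.isCompact_of_isClosed_isBounded (isClosed_le hcont continuous_const) ?_
    refine (Metric.isBounded_closedBall (x := xbar) (r := |ρ|)).subset ?_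
    intro x hx
    have h0 : (0:ℝ) ≤ ∑ j, |x j - xbar j| := Finset.sum_nonneg fun j _ => abs_nonneg _
    have hx' : ∑ j, |x j - xbar j| ≤ |ρ| := le_trans hx (le_abs_self ρ)
    rw [Metric.mem_closedBall, dist_pi_le_iff (le_trans h0 hx')]
    intro j
    rw [Real.dist_eq]
    exact le_trans (habs_le x j) hx'
  have hwcont : ContinuousOn (fun x => ∑ m, |u m x - v m x|)
      {x : Fin n → ℝ | ∑ j, |x j - xbar j| ≤ σ} := by
    apply continuousOn_finset_sum
    intro m _
    have hum : ContinuousOn (fun x : Fin n → ℝ => u m x) {x | ∑ j, |x j - xbar j| ≤ σ} :=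
      (continuous_apply m).comp_continuousOn hu.continuousOn
    have hvm : ContinuousOn (fun x : Fin n → ℝ => v m x) {x | ∑ j, |x j - xbar j| ≤ σ} :=
      (continuous_apply m).comp_continuousOn hv.continuousOn
    exact (hum.sub hvm).abs
  have key : ∀ k : ℕ, ∀ x : Fin n → ℝ, (∑ j, |x j - xbar j|) ≤ min σ ((k:ℝ) * δ) →
      ∀ m, u m x = v m x := by
    intro k
    induction k with
    | zero =>
      intro x hx m
      have hx0 : ∑ j, |x j - xbar j| ≤ 0 := le_trans hx (by simp)
      have hxσ : ∑ j, |x j - xbar j| ≤ σ := le_trans hx0 hσ.le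
      have hxeq : x (idx m) = xbar (idx m) := by
        have h1 := habs_le x (idx m)
        have h2 := abs_nonneg (x (idx m) - xbar (idx m))
        have h3 : |x (idx m) - xbar (idx m)| = 0 := le_antisymm (by linarith) h2
        exact sub_eq_zero.mp (abs_eq_zero.mp h3)
      rw [hudata x hxσ m hxeq, hvdata x hxσ m hxeq]
    | succ k ih =>
      have goal' : ∀ x : Fin n → ℝ, (∑ j, |x j - xbar j|) ≤ min σ (((k:ℝ)+1) * δ) →
          ∀ m, u m x = v m x := by
        set ρ : ℝ := min σ ((k:ℝ) * δ) with hρdef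
        set ρ' : ℝ := min σ (((k:ℝ)+1) * δ) with hρ'def
        have hρ'ρ : ρ' ≤ ρ + δ := by
          rcases le_total σ ((k:ℝ) * δ) with hc | hc
          · rw [hρdef, min_eq_left hc]
            have := min_le_left σ (((k:ℝ)+1) * δ)
            rw [← hρ'def] at this
            linarith
          · rw [hρdef, min_eq_right hc]
            have := min_le_right σ (((k:ℝ)+1) * δ)
            rw [← hρ'def] at this
            linarith
        have hρ'σ : ρ' ≤ σ := min_le_left _ _
        have hρ'nonneg : 0 ≤ ρ' := le_min hσ.le (by positivity)
        obtain ⟨x0, hx0mem, hx0max⟩ :=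
          (hKcompact ρ').exists_isMaxOn ⟨xbar, by simpa using hρ'nonneg⟩
            (hwcont.mono fun y hy => le_trans hy hρ'σ)
        have hx0max' : ∀ y : Fin n → ℝ, (∑ j, |y j - xbar j|) ≤ ρ' →
            (∑ m, |u m y - v m y|) ≤ ∑ m, |u m x0 - v m x0| := fun y hy => hx0max hy
        have hψ0 : (0:ℝ) ≤ ∑ m, |u m x0 - v m x0| := hwnonneg x0
        have hest : ∀ x : Fin n → ℝ, (∑ j, |x j - xbar j|) ≤ ρ' → ∀ h,
            |u h x - v h x| ≤ L * (∑ m, |u m x0 - v m x0|) * δ := by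
          intro x hx h
          set di : ℝ := |x (idx h) - xbar (idx h)| with hdidef
          set s : ℝ := ∑ j ∈ Finset.univ.erase (idx h), |x j - xbar j| with hsdef
          have hs0 : 0 ≤ s := Finset.sum_nonneg fun j _ => abs_nonneg _
          have hdi0 : 0 ≤ di := abs_nonneg _
          have hrs : (∑ j, |x j - xbar j|) = di + s := hsplit x (idx h)
          have hxσ : ∑ j, |x j - xbar j| ≤ σ := le_trans hx hρ'σ
          have hr : di + s ≤ ρ' := hrs ▸ hx
          set c : ℝ := min di (max 0 (ρ - s)) with hcdef
          have hc0 : 0 ≤ c := le_min hdi0 (le_max_left _ _)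
          have hcdi : c ≤ di := min_le_left _ _
          set e : ℝ := if xbar (idx h) ≤ x (idx h) then (1:ℝ) else -1 with hedef
          set t' : ℝ := xbar (idx h) + c * e with ht'def
          have ht'abs : |t' - xbar (idx h)| = c := by
            have habse : |e| = 1 := by rw [hedef]; split <;> norm_num
            rw [ht'def]
            have h1 : xbar (idx h) + c * e - xbar (idx h) = c * e := by ring
            rw [h1, abs_mul, habse, mul_one, abs_of_nonneg hc0]
          have hxt' : |x (idx h) - t'| = di - c := by
            rw [ht'def]
            rcases le_or_gt (xbar (idx h)) (x (idx h)) with hle | hlt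
            · rw [hedef, if_pos hle, mul_one]
              have hdi' : di = x (idx h) - xbar (idx h) := by
                rw [hdidef, abs_of_nonneg (by linarith)]
              rw [abs_of_nonneg (by linarith)]
              linarith
            · rw [hedef, if_neg (not_le.mpr hlt), mul_neg_one]
              have hdi' : di = xbar (idx h) - x (idx h) := by
                rw [hdidef, abs_of_neg (by linarith)]; ring
              rw [abs_of_nonpos (by linarith)]
              linarith
          have hupd : ∀ t : ℝ, ∑ j, |Function.update x (idx h) t j - xbar j| = |t - xbar (idx h)| + s := by
            intro t; rw [hupdate_sum, ← hsdef]
          have hTmem : ∀ t ∈ Set.uIcc t' (x (idx h)), |t - xbar (idx h)| ≤ di := by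
            intro t ht
            rw [Set.mem_uIcc] at ht
            have h1 := abs_le.mp (le_of_eq ht'abs)
            have h2 : |x (idx h) - xbar (idx h)| ≤ di := le_of_eq hdidef.symm
            have h3 := abs_le.mp h2
            rw [abs_le]
            rcases ht with ⟨ha1, ha2⟩ | ⟨ha1, ha2⟩ <;> constructor <;> linarith [h1.1, h1.2, h3.1, h3.2]
          have hTσ : ∀ t ∈ Set.uIcc t' (x (idx h)),
              ∑ j, |Function.update x (idx h) t j - xbar j| ≤ σ := by
            intro t ht
            rw [hupd]
            have := hTmem t ht
            linarith
          have hDu : ∀ t ∈ Set.uIcc t' (x (idx h)),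
              HasDerivWithinAt (fun s' => u h (Function.update x (idx h) s'))
                (f h (Function.update x (idx h) t) (fun m => u m (Function.update x (idx h) t)))
                (Set.uIcc t' (x (idx h))) t := by
            intro t ht
            have h1 := hupde (Function.update x (idx h) t) (hTσ t ht) h
            simp only [Function.update_idem, Function.update_self] at h1
            exact h1.mono fun s' hs' => hTσ s' hs'
          have hDv : ∀ t ∈ Set.uIcc t' (x (idx h)),
              HasDerivWithinAt (fun s' => v h (Function.update x (idx h) s'))
                (f h (Function.update x (idx h) t) (fun m => v m (Function.update x (idx h) t)))
                (Set.uIcc t' (x (idx h))) t := by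
            intro t ht
            have h1 := hvpde (Function.update x (idx h) t) (hTσ t ht) h
            simp only [Function.update_idem, Function.update_self] at h1
            exact h1.mono fun s' hs' => hTσ s' hs'
          have hderiv : ∀ t ∈ Set.uIcc t' (x (idx h)),
              HasDerivWithinAt
                (fun s' => u h (Function.update x (idx h) s') - v h (Function.update x (idx h) s'))
                ((fun t => f h (Function.update x (idx h) t) (fun m => u m (Function.update x (idx h) t))
                  - f h (Function.update x (idx h) t) (fun m => v m (Function.update x (idx h) t))) t)
                (Set.uIcc t' (x (idx h))) t := fun t ht => (hDu t ht).sub (hDv t ht)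
          have hbound : ∀ t ∈ Set.uIcc t' (x (idx h)),
              ‖(fun t => f h (Function.update x (idx h) t) (fun m => u m (Function.update x (idx h) t))
                  - f h (Function.update x (idx h) t) (fun m => v m (Function.update x (idx h) t))) t‖
                ≤ L * (∑ m, |u m x0 - v m x0|) := by
            intro t ht
            have hyσ := hTσ t ht
            have hya : ∑ j, |Function.update x (idx h) t j - xbar j| ≤ a := le_trans hyσ hσa
            have h1 := hfL h (Function.update x (idx h) t)
              (fun m => u m (Function.update x (idx h) t))
              (fun m => v m (Function.update x (idx h) t)) hya
              (hurange _ hyσ) (hvrange _ hyσ)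
            have hyρ' : ∑ j, |Function.update x (idx h) t j - xbar j| ≤ ρ' := by
              rw [hupd]
              have := hTmem t ht
              linarith
            have h2 := hx0max' _ hyρ'
            rw [Real.norm_eq_abs]
            calc |f h (Function.update x (idx h) t) (fun m => u m (Function.update x (idx h) t))
                  - f h (Function.update x (idx h) t) (fun m => v m (Function.update x (idx h) t))|
                ≤ L * ∑ m, |u m (Function.update x (idx h) t) - v m (Function.update x (idx h) t)| := h1
              _ ≤ L * (∑ m, |u m x0 - v m x0|) := mul_le_mul_of_nonneg_left h2 hL
          have hmvt := Convex.norm_image_sub_le_of_norm_hasDerivWithin_le hderiv hbound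
            (convex_uIcc t' (x (idx h))) Set.left_mem_uIcc Set.right_mem_uIcc
          have hgt' : u h (Function.update x (idx h) t') - v h (Function.update x (idx h) t') = 0 := by
            by_cases hcase : s + c ≤ ρ
            · have hmem : ∑ j, |Function.update x (idx h) t' j - xbar j| ≤ ρ := by
                rw [hupd, ht'abs]; linarith
              rw [ih _ hmem h, sub_self]
            · have hceq : c = 0 := by
                rcases le_or_gt (max 0 (ρ - s)) 0 with hm | hm
                · have h1 : c ≤ 0 := le_trans (min_le_right _ _) hm
                  linarith
                · have hmax : max 0 (ρ - s) = ρ - s := by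
                    rcases max_choice 0 (ρ - s) with hc1 | hc1
                    · rw [hc1] at hm; linarith
                    · exact hc1
                  have h1 : c ≤ ρ - s := hmax ▸ (min_le_right _ _)
                  exact absurd (by linarith : s + c ≤ ρ) hcase
              have ht'eq : t' = xbar (idx h) := by rw [ht'def, hceq]; ring
              have hyσ' : ∑ j, |Function.update x (idx h) t' j - xbar j| ≤ σ :=
                hTσ t' Set.left_mem_uIcc
              have hyi : (Function.update x (idx h) t') (idx h) = xbar (idx h) := by
                rw [Function.update_self, ht'eq]
              rw [hudata _ hyσ' h hyi, hvdata _ hyσ' h hyi, sub_self]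
          have hgx : Function.update x (idx h) (x (idx h)) = x := Function.update_eq_self _ _
          simp only [hgx, hgt', Real.norm_eq_abs, sub_zero] at hmvt
          have hfinal : |x (idx h) - t'| ≤ δ := by
            rw [hxt']
            rcases le_or_gt di (max 0 (ρ - s)) with hc1 | hc1
            · have hceq : c = di := min_eq_left hc1
              linarith
            · have hceq : c = max 0 (ρ - s) := min_eq_right hc1.le
              rcases le_or_gt 0 (ρ - s) with hc2 | hc2
              · have hceq2 : c = ρ - s := by rw [hceq, max_eq_right hc2]
                linarith
              · have hceq2 : c = 0 := by rw [hceq, max_eq_left hc2.le]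
                linarith
          calc |u h x - v h x| ≤ L * (∑ m, |u m x0 - v m x0|) * |x (idx h) - t'| := hmvt
            _ ≤ L * (∑ m, |u m x0 - v m x0|) * δ :=
                mul_le_mul_of_nonneg_left hfinal (mul_nonneg hL hψ0)
        have hwle : ∀ x : Fin n → ℝ, (∑ j, |x j - xbar j|) ≤ ρ' →
            (∑ m, |u m x - v m x|) ≤ (N:ℝ) * (L * (∑ m, |u m x0 - v m x0|) * δ) := by
          intro x hx
          calc (∑ m, |u m x - v m x|)
              ≤ ∑ _m : Fin N, L * (∑ m, |u m x0 - v m x0|) * δ :=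
                Finset.sum_le_sum fun m _ => hest x hx m
            _ = (N:ℝ) * (L * (∑ m, |u m x0 - v m x0|) * δ) := by
                rw [Finset.sum_const, Finset.card_univ, Fintype.card_fin, nsmul_eq_mul]
        have hψzero : (∑ m, |u m x0 - v m x0|) = 0 := by
          have h1 := hwle x0 hx0mem
          refine le_antisymm ?_ hψ0
          nlinarith [mul_le_mul_of_nonneg_right hNLδ hψ0]
        intro x hx m
        have h1 : (∑ m', |u m' x - v m' x|) ≤ 0 := by
          have h2 := hwle x hx
          rw [hψzero] at h2
          simpa using h2
        have h2 := hwabs_le x m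
        have h3 := abs_nonneg (u m x - v m x)
        have h4 : |u m x - v m x| = 0 := le_antisymm (by linarith) h3
        exact sub_eq_zero.mp (abs_eq_zero.mp h4)
      intro x hx m
      refine goal' x ?_ m
      push_cast at hx
      exact hx
  intro x hx h
  obtain ⟨k, hk⟩ := exists_nat_ge (σ / δ)
  have hkδ : σ ≤ (k:ℝ) * δ := by
    rw [div_le_iff₀ hδpos] at hk
    linarith
  exact key k x (by rw [min_eq_left hkδ]; exact hx) h
end

section
/- Let a Darboux system u^I_{x_i} = F^I_i(x; U^I_i) in n variables be given, and fix ℓ ∈ {1,…,n-1}. Define system ℓ by taking, for each I ∈ 𝓘 with ℓ ∈ I ≠ (ℓ) and each i ∈ I∖ℓ, the equation u^{ℓ,I}_{x_i}(x'^ℓ) = F^I_i(x'^ℓ_0; [ū^{(ℓ)}(x'^ℓ)], U^{ℓ,I}_i(x'^ℓ)) obtained by restriction to the hyperplane {x_ℓ = 0} (with any occurrence of u^{(ℓ)} replaced by the data function ū^{(ℓ)}). Then system ℓ is again a closed Darboux system in the n−1 independent variables x'^ℓ: every unknown appearing on a right-hand side is differentiated in some equation of system ℓ, and the integrability conditions for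 system ℓ hold identically as a consequence of the integrability conditions of the original system restricted to {x_ℓ = 0}. -/
open Set Function

/-- The substitution used in forming the restricted "system ℓ": unknowns that survive
the restriction to `{x_ℓ = 0}` (those `m` with `ℓ ∈ P m ≠ {ℓ}`) keep their value,
while the unknown with pattern `{ℓ}` (and only it, up to irrelevant junk coordinates)
is replaced by its data function evaluated on the hyperplane. -/
noncomputable def darbouxSubst (n : ℕ) (κ : Type) (P : κ → Finset (Fin n))
    (ubar : κ → (Fin n → ℝ) → ℝ) (ℓ : Fin n)
    (x : Fin n → ℝ) (V : κ → ℝ) : κ → ℝ :=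
  fun m => if ℓ ∈ P m ∧ P m ≠ {ℓ} then V m else ubar m (Function.update x ℓ 0)

/-- The right-hand sides of the restricted "system ℓ". -/
noncomputable def darbouxRestrictRHS (n : ℕ) (κ : Type) (P : κ → Finset (Fin n))
    (F : κ → Fin n → (Fin n → ℝ) → (κ → ℝ) → ℝ)
    (ubar : κ → (Fin n → ℝ) → ℝ) (ℓ : Fin n)
    (k : κ) (i : Fin n) (x : Fin n → ℝ) (V : κ → ℝ) : ℝ :=
  F k i (Function.update x ℓ 0) (darbouxSubst n κ P ubar ℓ x V)

/-!
An integrability condition of system `ℓ` involves two indices `i ≠ j` of `I`, both different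
from `ℓ`. Every unknown `u^K` on which `F^I_i` depends has `K ⊇ I ∖ i ∋ ℓ, j`, so it survives
the restriction to `{x_ℓ = 0}` and the data `ū` never enters `F^I_i`. Hence the restricted
right-hand side is `F^I_i` precomposed with the affine map `(y, V) ↦ (y with y_ℓ = 0, V + c)`,
and its derivative along `(e_j, F_j)` is that of `F^I_i` at the corresponding point of the
hyperplane; the integrability conditions of system `ℓ` are those of the original system there.
-/

theorem fderiv_apply_eq_of_forall_add_smul_eq {𝕜 E E' F : Type*} [NontriviallyNormedField 𝕜]
    [NormedAddCommGroup E] [NormedSpace 𝕜 E] [NormedAddCommGroup E'] [NormedSpace 𝕜 E']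
    [NormedAddCommGroup F] [NormedSpace 𝕜 F] {f : E → F} {g : E' → F} {p v : E} {q w : E'}
    (hf : DifferentiableAt 𝕜 f p) (hg : DifferentiableAt 𝕜 g q)
    (h : ∀ t : 𝕜, f (p + t • v) = g (q + t • w)) :
    fderiv 𝕜 f p v = fderiv 𝕜 g q w := by
  rw [← hf.lineDeriv_eq_fderiv, ← hg.lineDeriv_eq_fderiv, lineDeriv, lineDeriv, funext h]

theorem differentiable_update_const {𝕜 ι : Type*} [NontriviallyNormedField 𝕜] [Fintype ι]
    [DecidableEq ι] {E : ι → Type*} [∀ i, NormedAddCommGroup (E i)] [∀ i, NormedSpace 𝕜 (E i)]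
    (i : ι) (v : E i) : Differentiable 𝕜 (fun y : (∀ j, E j) => update y i v) := by
  refine differentiable_pi.2 fun j => ?_
  rcases eq_or_ne j i with rfl | hj
  · simp only [update_self]
    exact differentiable_const v
  · simp only [update_of_ne hj]
    exact differentiable_apply j

theorem Finset.mem_of_sdiff_singleton_subset {α : Type*} [DecidableEq α] {s t : Finset α}
    {a i : α} (ha : a ∈ s) (hai : a ≠ i) (h : s \ {i} ⊆ t) : a ∈ t :=
  h (Finset.mem_sdiff.2 ⟨ha, Finset.notMem_singleton.2 hai⟩)

section RestrictedSystem

variable {n : ℕ} {κ : Type} {P : κ → Finset (Fin n)}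
  {F : κ → Fin n → (Fin n → ℝ) → (κ → ℝ) → ℝ} {ubar : κ → (Fin n → ℝ) → ℝ} {ℓ : Fin n}

theorem darbouxSubst_of_survives {m : κ} (hℓm : ℓ ∈ P m) (hm : P m ≠ {ℓ})
    (x : Fin n → ℝ) (V : κ → ℝ) : darbouxSubst n κ P ubar ℓ x V m = V m :=
  if_pos ⟨hℓm, hm⟩

theorem darbouxRestrictRHS_of_mem_hyperplane (k : κ) (i : Fin n) {x : Fin n → ℝ}
    (hx : x ℓ = 0) (V : κ → ℝ) :
    darbouxRestrictRHS n κ P F ubar ℓ k i x V = F k i x (darbouxSubst n κ P ubar ℓ x V) := by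
  rw [darbouxRestrictRHS, update_eq_self_iff.2 hx.symm]

theorem darbouxRestrictRHS_congr {k : κ} {i : Fin n}
    (hdep : ∀ x U V, (∀ m, P k \ {i} ⊆ P m → U m = V m) → F k i x U = F k i x V)
    (x : Fin n → ℝ) {V W : κ → ℝ}
    (hVW : ∀ m, ℓ ∈ P m → P m ≠ {ℓ} → P k \ {i} ⊆ P m → V m = W m) :
    darbouxRestrictRHS n κ P F ubar ℓ k i x V = darbouxRestrictRHS n κ P F ubar ℓ k i x W := by
  refine hdep _ _ _ fun m hm => ?_
  by_cases hc : ℓ ∈ P m ∧ P m ≠ {ℓ}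
  · rw [darbouxSubst_of_survives hc.1 hc.2, darbouxSubst_of_survives hc.1 hc.2]
    exact hVW m hc.1 hc.2 hm
  · simp only [darbouxSubst, if_neg hc]

theorem darbouxRestrictRHS_eq_of_eqOn_survivors {k : κ} {a b : Fin n}
    (hdep : ∀ x U V, (∀ m, P k \ {a} ⊆ P m → U m = V m) → F k a x U = F k a x V)
    (hℓk : ℓ ∈ P k) (hbk : b ∈ P k) (hab : a ≠ b) (haℓ : a ≠ ℓ) (hbℓ : b ≠ ℓ)
    (x : Fin n → ℝ) {V U : κ → ℝ} (hUV : ∀ m, ℓ ∈ P m → P m ≠ {ℓ} → U m = V m) :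
    darbouxRestrictRHS n κ P F ubar ℓ k a x V = F k a (update x ℓ 0) U := by
  refine hdep _ _ _ fun m hm => ?_
  have hℓm := Finset.mem_of_sdiff_singleton_subset hℓk haℓ.symm hm
  have hbm := Finset.mem_of_sdiff_singleton_subset hbk hab.symm hm
  have hm' : P m ≠ {ℓ} := fun h => hbℓ (Finset.mem_singleton.1 (h ▸ hbm))
  rw [darbouxSubst_of_survives hℓm hm', hUV m hℓm hm']

variable [Fintype κ]

theorem fderiv_darbouxRestrictRHS_apply {k : κ} {a b : Fin n}
    (hdep : ∀ x U V, (∀ m, P k \ {a} ⊆ P m → U m = V m) → F k a x U = F k a x V)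
    (hℓk : ℓ ∈ P k) (hbk : b ∈ P k) (hab : a ≠ b) (haℓ : a ≠ ℓ) (hbℓ : b ≠ ℓ)
    {x : Fin n → ℝ} (hx : x ℓ = 0) (V : κ → ℝ)
    (hF : DifferentiableAt ℝ (fun q : (Fin n → ℝ) × (κ → ℝ) => F k a q.1 q.2)
      (x, darbouxSubst n κ P ubar ℓ x V))
    (W : κ → ℝ) :
    fderiv ℝ (fun q : (Fin n → ℝ) × (κ → ℝ) =>
        darbouxRestrictRHS n κ P F ubar ℓ k a q.1 q.2) (x, V) (Pi.single b 1, W)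
      = fderiv ℝ (fun q : (Fin n → ℝ) × (κ → ℝ) => F k a q.1 q.2)
        (x, darbouxSubst n κ P ubar ℓ x V) (Pi.single b 1, W) := by
  -- `V' + c` agrees with `darbouxSubst n κ P ubar ℓ y V'` on the survivors, and is
  -- `darbouxSubst n κ P ubar ℓ x V` at `V' = V`.
  set c := darbouxSubst n κ P ubar ℓ x V - V
  have hG : ∀ y V', darbouxRestrictRHS n κ P F ubar ℓ k a y V'
      = F k a (update y ℓ 0) (V' + c) := fun y V' =>
    darbouxRestrictRHS_eq_of_eqOn_survivors hdep hℓk hbk hab haℓ hbℓ y fun m hℓm hm => by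
      simp [c, darbouxSubst_of_survives hℓm hm]
  have hxV : (update x ℓ 0, V + c) = (x, darbouxSubst n κ P ubar ℓ x V) := by
    rw [update_eq_self_iff.2 hx.symm, add_sub_cancel]
  have hGd : DifferentiableAt ℝ (fun q : (Fin n → ℝ) × (κ → ℝ) =>
      darbouxRestrictRHS n κ P F ubar ℓ k a q.1 q.2) (x, V) := by
    have hupd := differentiable_update_const (𝕜 := ℝ) (E := fun _ : Fin n => ℝ) ℓ 0
    simp only [hG]
    exact (hxV ▸ hF).comp (f := fun q : (Fin n → ℝ) × (κ → ℝ) => (update q.1 ℓ 0,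
      q.2 + c)) (x, V) (by fun_prop)
  refine fderiv_apply_eq_of_forall_add_smul_eq hGd hF fun t => ?_
  have hline : update (x + t • Pi.single b (1 : ℝ)) ℓ 0 = x + t • Pi.single b 1 :=
    update_eq_self_iff.2 (by simp [hx, hbℓ.symm])
  simp only [Prod.fst_add, Prod.snd_add, Prod.smul_fst, Prod.smul_snd, hG, hline, c]
  congr 1
  abel

end RestrictedSystem

theorem darboux_restricted_system_is_darboux_general (n : ℕ) (κ : Type) [Fintype κ]
    (P : κ → Finset (Fin n))
    (F : κ → Fin n → (Fin n → ℝ) → (κ → ℝ) → ℝ)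
    (ubar : κ → (Fin n → ℝ) → ℝ)
    (s : Set ((Fin n → ℝ) × (κ → ℝ))) (hs : IsOpen s)
    (s0 : Set (Fin n → ℝ))
    (hFsm : ∀ k, ∀ i ∈ P k,
      ContDiffOn ℝ 2 (fun p : (Fin n → ℝ) × (κ → ℝ) => F k i p.1 p.2) s)
    (hdep : ∀ k, ∀ i ∈ P k, ∀ x U V,
      (∀ m, P k \ {i} ⊆ P m → U m = V m) → F k i x U = F k i x V)
    (hint : ∀ k, ∀ i ∈ P k, ∀ j ∈ P k, i ≠ j → ∀ p ∈ s,
      fderiv ℝ (fun q : (Fin n → ℝ) × (κ → ℝ) => F k i q.1 q.2) p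
        ((Pi.single j 1 : Fin n → ℝ), fun m => F m j p.1 p.2)
      = fderiv ℝ (fun q : (Fin n → ℝ) × (κ → ℝ) => F k j q.1 q.2) p
        ((Pi.single i 1 : Fin n → ℝ), fun m => F m i p.1 p.2))
    (ℓ : Fin n) :
    -- (1) system ℓ is closed
    (∀ k, ℓ ∈ P k → P k ≠ {ℓ} → ∀ i ∈ P k, i ≠ ℓ →
      ∀ m, P k \ {i} ⊆ P m → P m ≠ {ℓ} →
        ℓ ∈ P m ∧ P m ≠ {ℓ} ∧ ∃ i' ∈ P m, i' ≠ ℓ) ∧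
    -- (2) each restricted right-hand side depends only on the unknowns it should
    (∀ k, ℓ ∈ P k → P k ≠ {ℓ} → ∀ i ∈ P k, i ≠ ℓ → ∀ x V W,
      (∀ m, ℓ ∈ P m → P m ≠ {ℓ} → P k \ {i} ⊆ P m → V m = W m) →
      darbouxRestrictRHS n κ P F ubar ℓ k i x V
        = darbouxRestrictRHS n κ P F ubar ℓ k i x W) ∧
    -- (3) the integrability conditions for system ℓ hold identically
    (∀ k, ℓ ∈ P k → ∀ i ∈ P k, ∀ j ∈ P k, i ≠ j → i ≠ ℓ → j ≠ ℓ →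
      ∀ (x : Fin n → ℝ) (V : κ → ℝ), x ℓ = 0 →
        (x, darbouxSubst n κ P ubar ℓ x V) ∈ s → x ∈ s0 →
        fderiv ℝ (fun q : (Fin n → ℝ) × (κ → ℝ) =>
            darbouxRestrictRHS n κ P F ubar ℓ k i q.1 q.2) (x, V)
          ((Pi.single j 1 : Fin n → ℝ),
            fun m => darbouxRestrictRHS n κ P F ubar ℓ m j x V)
        = fderiv ℝ (fun q : (Fin n → ℝ) × (κ → ℝ) =>
            darbouxRestrictRHS n κ P F ubar ℓ k j q.1 q.2) (x, V)
          ((Pi.single i 1 : Fin n → ℝ),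
            fun m => darbouxRestrictRHS n κ P F ubar ℓ m i x V)) := by
  refine ⟨fun k hℓk _ i _ hiℓ m hsub hm => ?_, fun k _ _ i hik _ x V W hVW => ?_,
    fun k hℓk i hik j hjk hij hiℓ hjℓ x V hx hps _ => ?_⟩
  · have hℓm := Finset.mem_of_sdiff_singleton_subset hℓk hiℓ.symm hsub
    exact ⟨hℓm, hm, ((Finset.nontrivial_iff_ne_singleton hℓm).2 hm).exists_ne ℓ⟩
  · exact darbouxRestrictRHS_congr (hdep k i hik) x hVW
  · have hF : ∀ a ∈ P k, DifferentiableAt ℝ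
        (fun q : (Fin n → ℝ) × (κ → ℝ) => F k a q.1 q.2) (x, darbouxSubst n κ P ubar ℓ x V) :=
      fun a ha => ((hFsm k a ha).contDiffAt (hs.mem_nhds hps)).differentiableAt two_ne_zero
    simp only [darbouxRestrictRHS_of_mem_hyperplane _ _ hx]
    rw [fderiv_darbouxRestrictRHS_apply (hdep k i hik) hℓk hjk hij hiℓ hjℓ hx V (hF i hik),
      fderiv_darbouxRestrictRHS_apply (hdep k j hjk) hℓk hik hij.symm hjℓ hiℓ hx V (hF j hjk)]
    exact hint k i hik j hjk hij _ hps

/-- Claim 5.1 in the proof of Darboux's theorem: restricting a Darboux system to the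
hyperplane `{x_ℓ = 0}` (substituting the data for the unknown with pattern `{ℓ}`)
again yields a closed Darboux system in the remaining `n-1` variables: (1) every
unknown appearing on a right-hand side of system ℓ is differentiated in system ℓ;
(2) each restricted right-hand side depends only on the unknowns `u^{ℓ,K}` with
`K ⊇ I∖i`; (3) the integrability conditions for system ℓ hold identically, as a
consequence of those of the original system restricted to `{x_ℓ = 0}`. -/
theorem darboux_restricted_system_is_darboux (n : ℕ) (κ : Type) [Fintype κ]
    (P : κ → Finset (Fin n)) (hP : ∀ k, (P k).Nonempty)
    (F : κ → Fin n → (Fin n → ℝ) → (κ → ℝ) → ℝ)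
    (ubar : κ → (Fin n → ℝ) → ℝ)
    (s : Set ((Fin n → ℝ) × (κ → ℝ))) (hs : IsOpen s)
    (hbase : ((0 : Fin n → ℝ), fun k => ubar k 0) ∈ s)
    (s0 : Set (Fin n → ℝ)) (hs0 : IsOpen s0) (h0s0 : (0 : Fin n → ℝ) ∈ s0)
    (hubar : ∀ k, ContDiffOn ℝ 2 (ubar k) s0)
    (hFsm : ∀ k, ∀ i ∈ P k,
      ContDiffOn ℝ 2 (fun p : (Fin n → ℝ) × (κ → ℝ) => F k i p.1 p.2) s)
    (hdep : ∀ k, ∀ i ∈ P k, ∀ x U V,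
      (∀ m, P k \ {i} ⊆ P m → U m = V m) → F k i x U = F k i x V)
    (hint : ∀ k, ∀ i ∈ P k, ∀ j ∈ P k, i ≠ j → ∀ p ∈ s,
      fderiv ℝ (fun q : (Fin n → ℝ) × (κ → ℝ) => F k i q.1 q.2) p
        ((Pi.single j 1 : Fin n → ℝ), fun m => F m j p.1 p.2)
      = fderiv ℝ (fun q : (Fin n → ℝ) × (κ → ℝ) => F k j q.1 q.2) p
        ((Pi.single i 1 : Fin n → ℝ), fun m => F m i p.1 p.2))
    (ℓ : Fin n) :
    -- (1) system ℓ is closed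
    (∀ k, ℓ ∈ P k → P k ≠ {ℓ} → ∀ i ∈ P k, i ≠ ℓ →
      ∀ m, P k \ {i} ⊆ P m → P m ≠ {ℓ} →
        ℓ ∈ P m ∧ P m ≠ {ℓ} ∧ ∃ i' ∈ P m, i' ≠ ℓ) ∧
    -- (2) each restricted right-hand side depends only on the unknowns it should
    (∀ k, ℓ ∈ P k → P k ≠ {ℓ} → ∀ i ∈ P k, i ≠ ℓ → ∀ x V W,
      (∀ m, ℓ ∈ P m → P m ≠ {ℓ} → P k \ {i} ⊆ P m → V m = W m) →
      darbouxRestrictRHS n κ P F ubar ℓ k i x V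
        = darbouxRestrictRHS n κ P F ubar ℓ k i x W) ∧
    -- (3) the integrability conditions for system ℓ hold identically
    (∀ k, ℓ ∈ P k → ∀ i ∈ P k, ∀ j ∈ P k, i ≠ j → i ≠ ℓ → j ≠ ℓ →
      ∀ (x : Fin n → ℝ) (V : κ → ℝ), x ℓ = 0 →
        (x, darbouxSubst n κ P ubar ℓ x V) ∈ s → x ∈ s0 →
        fderiv ℝ (fun q : (Fin n → ℝ) × (κ → ℝ) =>
            darbouxRestrictRHS n κ P F ubar ℓ k i q.1 q.2) (x, V)
          ((Pi.single j 1 : Fin n → ℝ),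
            fun m => darbouxRestrictRHS n κ P F ubar ℓ m j x V)
        = fderiv ℝ (fun q : (Fin n → ℝ) × (κ → ℝ) =>
            darbouxRestrictRHS n κ P F ubar ℓ k j q.1 q.2) (x, V)
          ((Pi.single i 1 : Fin n → ℝ),
            fun m => darbouxRestrictRHS n κ P F ubar ℓ m i x V)) :=
  darboux_restricted_system_is_darboux_general n κ P F ubar s hs s0 hFsm hdep hint ℓ
end

section
/- Suppose Û solves the determined subsystem û^I_{x_{min I}} = F^I_{min I}(x; Û^I_{min I}) (one equation per I ∈ 𝓘) of a C² Darboux system near 0, and define Δ^I_i(x) := û^I_{x_i}(x) − F^I_i(x; Û^I_i(x)) for i ∈ I with i > min I. Then for each such (I,i), with ℓ := min I, the derivative ∂_{x_ℓ} Δ^I_i exists and equals Σ_{K ⊇ I∖ℓ} A^I_{ℓ,K}(x) Δ^K_i(x) − Σ_{K ⊇ I∖i} A^I_{i,K}(x) Δ^K_ℓ(x), where A^I_{j,K}(x) := F^I_{j,u^K}(x; Û^I_j(x)); in these sums, the terms with min K equal to i (first sum) or ℓ (second sum) vanish identically. -/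
/-!
On the ball, `Δ^K_j = ∂_j û^K − F^K_j(x, Û)`. Since `û^I` solves its equation in the direction
`ℓ = min I`, `∂_ℓ û^I = F^I_ℓ(x, Û)` near `x`, so by the symmetry of second derivatives
`∂_ℓ Δ^I_i = ∂_i [F^I_ℓ(x, Û)] − ∂_ℓ [F^I_i(x, Û)]`. Expanding both terms by the chain rule and
writing `∂_j û^K = F^K_j + Δ^K_j`, the terms free of defects are the two sides of the
integrability condition and cancel.
-/

open Set Function

/-- The defect functions `Δ^I_i(x) = û^I_{x_i}(x) - F^I_i(x; Û^I_i(x))` measuring the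
failure of a solution of the determined subsystem to solve the remaining equations. -/
noncomputable def darbouxDefect (n : ℕ) (κ : Type)
    (F : κ → Fin n → (Fin n → ℝ) → (κ → ℝ) → ℝ)
    (uhat : κ → (Fin n → ℝ) → ℝ) (k : κ) (i : Fin n) (x : Fin n → ℝ) : ℝ :=
  deriv (fun t => uhat k (Function.update x i t)) (x i) -
    F k i x (fun m => uhat m x)

open Filter Topology

theorem HasFDerivAt.hasDerivAt_update {𝕜 ι E : Type*} [NontriviallyNormedField 𝕜]
    [Fintype ι] [DecidableEq ι] [NormedAddCommGroup E] [NormedSpace 𝕜 E]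
    {f : (ι → 𝕜) → E} {f' : (ι → 𝕜) →L[𝕜] E} {x : ι → 𝕜} (hf : HasFDerivAt f f' x) (i : ι) :
    HasDerivAt (fun t => f (update x i t)) (f' (Pi.single i 1)) (x i) := by
  rw [← update_eq_self i x] at hf
  exact hf.comp_hasDerivAt (x i) (_root_.hasDerivAt_update x i (x i))

theorem tendsto_update_nhds {𝕜 ι : Type*} [TopologicalSpace 𝕜] [DecidableEq ι]
    (x : ι → 𝕜) (i : ι) : Tendsto (update x i) (𝓝 (x i)) (𝓝 x) := by
  simpa using ((continuous_const (y := x)).update i continuous_id).tendsto (x i)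

section SecondDerivative

variable {E : Type*} [NormedAddCommGroup E] [NormedSpace ℝ E] {u : E → ℝ} {x : E}

theorem ContDiffAt.hasFDerivAt_fderiv_apply (hu : ContDiffAt ℝ 2 u x) (w : E) :
    HasFDerivAt (fun y => fderiv ℝ u y w) ((fderiv ℝ (fderiv ℝ u) x).flip w) x := by
  have hd : DifferentiableAt ℝ (fderiv ℝ u) x :=
    (hu.fderiv_right (m := 1) (by norm_num)).differentiableAt one_ne_zero
  exact (ContinuousLinearMap.apply ℝ ℝ w).hasFDerivAt.comp x hd.hasFDerivAt

theorem ContDiffAt.fderiv_fderiv_apply_eq_of_eventuallyEq {g : E → ℝ} {g' : E →L[ℝ] ℝ} {v : E}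
    (hu : ContDiffAt ℝ 2 u x) (hg : HasFDerivAt g g' x)
    (hug : (fun y => fderiv ℝ u y v) =ᶠ[𝓝 x] g) (w : E) :
    fderiv ℝ (fderiv ℝ u) x v w = g' w := by
  have hsymm := hu.isSymmSndFDerivAt (by simp [minSmoothness_of_isRCLikeNormedField])
  rw [hsymm v w, ← ((hu.hasFDerivAt_fderiv_apply v).congr_of_eventuallyEq hug.symm).unique hg]
  rfl

theorem ContDiffAt.hasDerivAt_update_fderiv_sub {ι : Type*} [Fintype ι] [DecidableEq ι]
    {u g h : (ι → ℝ) → ℝ} {g' h' : (ι → ℝ) →L[ℝ] ℝ} {x : ι → ℝ} {ℓ : ι}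
    (hu : ContDiffAt ℝ 2 u x) (hg : HasFDerivAt g g' x)
    (hug : (fun y => fderiv ℝ u y (Pi.single ℓ 1)) =ᶠ[𝓝 x] g) (hh : HasFDerivAt h h' x) (i : ι) :
    HasDerivAt (fun t => fderiv ℝ u (update x ℓ t) (Pi.single i 1) - h (update x ℓ t))
      (g' (Pi.single i 1) - h' (Pi.single ℓ 1)) (x ℓ) := by
  refine (((hu.hasFDerivAt_fderiv_apply (Pi.single i 1)).sub hh).hasDerivAt_update ℓ).congr_deriv ?_
  rw [sub_apply, ContinuousLinearMap.flip_apply, hu.fderiv_fderiv_apply_eq_of_eventuallyEq hg hug]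

end SecondDerivative

theorem hasFDerivAt_comp_graph {E κ : Type*} [NormedAddCommGroup E] [NormedSpace ℝ E]
    [Fintype κ] {Φ : E × (κ → ℝ) → ℝ} {Φ' : E × (κ → ℝ) →L[ℝ] ℝ} {u : κ → E → ℝ}
    {u' : κ → E →L[ℝ] ℝ} {x : E} (hΦ : HasFDerivAt Φ Φ' (x, fun m => u m x))
    (hu : ∀ m, HasFDerivAt (u m) (u' m) x) :
    HasFDerivAt (fun y => Φ (y, fun m => u m y))
      (Φ'.comp ((ContinuousLinearMap.id ℝ E).prod (ContinuousLinearMap.pi u'))) x :=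
  hΦ.comp x ((hasFDerivAt_id x).prodMk (hasFDerivAt_pi.2 hu))

theorem ContinuousLinearMap.map_prodMk_add {E κ : Type*} [NormedAddCommGroup E] [NormedSpace ℝ E]
    [Fintype κ] [DecidableEq κ] (L : E × (κ → ℝ) →L[ℝ] ℝ) (v : E) (a b : κ → ℝ) :
    L (v, fun m => a m + b m) = L (v, a) + ∑ m, L (0, Pi.single m 1) * b m := by
  have hb : ((0 : E), b) = ∑ m, b m • ((0 : E), (Pi.single m 1 : κ → ℝ)) := by
    rw [Prod.ext_iff, Prod.fst_sum, Prod.snd_sum]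
    refine ⟨by simp, ?_⟩
    simp only [Prod.smul_snd, ← Pi.single_smul, smul_eq_mul, mul_one]
    exact (Finset.univ_sum_single b).symm
  rw [show (v, fun m => a m + b m) = (v, a) + ((0 : E), b) from
    Prod.ext (add_zero v).symm rfl, map_add, hb, map_sum]
  simp_rw [map_smul, smul_eq_mul, mul_comm]

section Defect

variable {n : ℕ} {κ : Type} {F : κ → Fin n → (Fin n → ℝ) → (κ → ℝ) → ℝ}
  {uhat : κ → (Fin n → ℝ) → ℝ} {k : κ} {j : Fin n} {x : Fin n → ℝ}

theorem darbouxDefect_eq_zero_of_hasDerivAt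
    (h : HasDerivAt (fun t => uhat k (update x j t)) (F k j x fun m => uhat m x) (x j)) :
    darbouxDefect n κ F uhat k j x = 0 := by
  rw [darbouxDefect, h.deriv, sub_self]

theorem fderiv_single_eq_add_darbouxDefect (hk : DifferentiableAt ℝ (uhat k) x) :
    fderiv ℝ (uhat k) x (Pi.single j 1)
      = F k j x (fun m => uhat m x) + darbouxDefect n κ F uhat k j x := by
  rw [darbouxDefect, (hk.hasFDerivAt.hasDerivAt_update j).deriv, add_sub_cancel]

end Defect

theorem darboux_defect_linear_system_general (n : ℕ) (κ : Type) [Fintype κ] [DecidableEq κ]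
    (P : κ → Finset (Fin n)) (hP : ∀ k, (P k).Nonempty)
    (F : κ → Fin n → (Fin n → ℝ) → (κ → ℝ) → ℝ)
    (s : Set ((Fin n → ℝ) × (κ → ℝ))) (hs : IsOpen s)
    (hFsm : ∀ k, ∀ i ∈ P k,
      ContDiffOn ℝ 2 (fun p : (Fin n → ℝ) × (κ → ℝ) => F k i p.1 p.2) s)
    (hint : ∀ k, ∀ i ∈ P k, ∀ j ∈ P k, i ≠ j → ∀ p ∈ s,
      fderiv ℝ (fun q : (Fin n → ℝ) × (κ → ℝ) => F k i q.1 q.2) p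
        ((Pi.single j 1 : Fin n → ℝ), fun m => F m j p.1 p.2)
      = fderiv ℝ (fun q : (Fin n → ℝ) × (κ → ℝ) => F k j q.1 q.2) p
        ((Pi.single i 1 : Fin n → ℝ), fun m => F m i p.1 p.2))
    (σ : ℝ)
    (uhat : κ → (Fin n → ℝ) → ℝ)
    (huhat : ∀ k, ContDiffOn ℝ 2 (uhat k) (Metric.ball 0 σ))
    (hmem : ∀ x ∈ Metric.ball (0 : Fin n → ℝ) σ, (x, fun m => uhat m x) ∈ s)
    (hsolve : ∀ x ∈ Metric.ball (0 : Fin n → ℝ) σ, ∀ k,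
      HasDerivAt (fun t => uhat k (Function.update x ((P k).min' (hP k)) t))
        (F k ((P k).min' (hP k)) x (fun m => uhat m x)) (x ((P k).min' (hP k)))) :
    -- the defects in the `min` directions vanish identically ...
    (∀ x ∈ Metric.ball (0 : Fin n → ℝ) σ, ∀ m,
      darbouxDefect n κ F uhat m ((P m).min' (hP m)) x = 0) ∧
    -- ... and each remaining defect satisfies the linear homogeneous equation
    ∀ x ∈ Metric.ball (0 : Fin n → ℝ) σ, ∀ k, ∀ i ∈ P k,
      (P k).min' (hP k) < i →
      HasDerivAt
        (fun t => darbouxDefect n κ F uhat k i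
          (Function.update x ((P k).min' (hP k)) t))
        ((∑ m : κ,
            (fderiv ℝ (fun q : (Fin n → ℝ) × (κ → ℝ) =>
                F k ((P k).min' (hP k)) q.1 q.2) (x, fun m' => uhat m' x)
              ((0 : Fin n → ℝ), Pi.single m 1)) *
            darbouxDefect n κ F uhat m i x) -
          ∑ m : κ,
            (fderiv ℝ (fun q : (Fin n → ℝ) × (κ → ℝ) =>
                F k i q.1 q.2) (x, fun m' => uhat m' x)
              ((0 : Fin n → ℝ), Pi.single m 1)) *
            darbouxDefect n κ F uhat m ((P k).min' (hP k)) x)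
        (x ((P k).min' (hP k))) := by
  have hB : ∀ y ∈ Metric.ball (0 : Fin n → ℝ) σ, Metric.ball 0 σ ∈ 𝓝 y :=
    fun y hy => Metric.isOpen_ball.mem_nhds hy
  have hu : ∀ m, ∀ y ∈ Metric.ball (0 : Fin n → ℝ) σ, ContDiffAt ℝ 2 (uhat m) y :=
    fun m y hy => (huhat m).contDiffAt (hB y hy)
  have hdu : ∀ m, ∀ y ∈ Metric.ball (0 : Fin n → ℝ) σ, DifferentiableAt ℝ (uhat m) y :=
    fun m y hy => (hu m y hy).differentiableAt two_ne_zero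
  refine ⟨fun x hx m => darbouxDefect_eq_zero_of_hasDerivAt (hsolve x hx m), ?_⟩
  intro x hx k i hi hlt
  set ℓ := (P k).min' (hP k)
  have hG : ∀ j ∈ P k, HasFDerivAt (fun y => F k j y fun m => uhat m y)
      ((fderiv ℝ (fun q : (Fin n → ℝ) × (κ → ℝ) => F k j q.1 q.2) (x, fun m => uhat m x)).comp
        ((ContinuousLinearMap.id ℝ _).prod
          (ContinuousLinearMap.pi fun m => fderiv ℝ (uhat m) x))) x :=
    fun j hj => hasFDerivAt_comp_graph
      (((hFsm k j hj).contDiffAt (hs.mem_nhds (hmem x hx))).differentiableAt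
        two_ne_zero).hasFDerivAt
      fun m => (hdu m x hx).hasFDerivAt
  have hsolved : (fun y => fderiv ℝ (uhat k) y (Pi.single ℓ 1)) =ᶠ[𝓝 x]
      fun y => F k ℓ y fun m => uhat m y := by
    filter_upwards [hB x hx] with y hy
    exact ((hdu k y hy).hasFDerivAt.hasDerivAt_update ℓ).unique (hsolve y hy k)
  have hdefect : darbouxDefect n κ F uhat k i =ᶠ[𝓝 x]
      fun y => fderiv ℝ (uhat k) y (Pi.single i 1) - F k i y fun m => uhat m y := by
    filter_upwards [hB x hx] with y hy
    rw [fderiv_single_eq_add_darbouxDefect (hdu k y hy), add_sub_cancel_left]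
  refine (((hu k x hx).hasDerivAt_update_fderiv_sub (hG ℓ ((P k).min'_mem (hP k))) hsolved
    (hG i hi) i).congr_of_eventuallyEq
      (hdefect.comp_tendsto (tendsto_update_nhds x ℓ))).congr_deriv ?_
  simp only [ContinuousLinearMap.comp_apply, ContinuousLinearMap.prod_apply,
    ContinuousLinearMap.coe_pi', ContinuousLinearMap.id_apply,
    fun m j => fderiv_single_eq_add_darbouxDefect (F := F) (j := j) (hdu m x hx)]
  rw [ContinuousLinearMap.map_prodMk_add, ContinuousLinearMap.map_prodMk_add,
    hint k ℓ ((P k).min'_mem (hP k)) i hi hlt.ne _ (hmem x hx)]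
  ring

/-- Step (A) in the proof of Darboux's theorem on overdetermined systems: if `Û`
solves the determined subsystem consisting of the equations in the directions
`min I`, then for `i ∈ I` with `i > ℓ := min I` the defect `Δ^I_i` is differentiable
in `x_ℓ` with
`∂_{x_ℓ} Δ^I_i = Σ_K A^I_{ℓ,K} Δ^K_i − Σ_K A^I_{i,K} Δ^K_ℓ`,
where `A^I_{j,K}(x) = F^I_{j,u^K}(x; Û(x))` (the sums may be taken over all
unknowns, the coefficients for `K ⊉ I∖ℓ`, resp. `K ⊉ I∖i`, vanishing by the
dependence restrictions); moreover the defects `Δ^K_{min K}` vanish identically,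
so the terms with `min K = i` in the first sum and `min K = ℓ` in the second
sum vanish. -/
theorem darboux_defect_linear_system (n : ℕ) (κ : Type) [Fintype κ] [DecidableEq κ]
    (P : κ → Finset (Fin n)) (hP : ∀ k, (P k).Nonempty)
    (F : κ → Fin n → (Fin n → ℝ) → (κ → ℝ) → ℝ)
    (s : Set ((Fin n → ℝ) × (κ → ℝ))) (hs : IsOpen s)
    (hFsm : ∀ k, ∀ i ∈ P k,
      ContDiffOn ℝ 2 (fun p : (Fin n → ℝ) × (κ → ℝ) => F k i p.1 p.2) s)
    (hdep : ∀ k, ∀ i ∈ P k, ∀ x U V,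
      (∀ m, P k \ {i} ⊆ P m → U m = V m) → F k i x U = F k i x V)
    (hint : ∀ k, ∀ i ∈ P k, ∀ j ∈ P k, i ≠ j → ∀ p ∈ s,
      fderiv ℝ (fun q : (Fin n → ℝ) × (κ → ℝ) => F k i q.1 q.2) p
        ((Pi.single j 1 : Fin n → ℝ), fun m => F m j p.1 p.2)
      = fderiv ℝ (fun q : (Fin n → ℝ) × (κ → ℝ) => F k j q.1 q.2) p
        ((Pi.single i 1 : Fin n → ℝ), fun m => F m i p.1 p.2))
    (σ : ℝ) (hσ : 0 < σ)
    (uhat : κ → (Fin n → ℝ) → ℝ)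
    (huhat : ∀ k, ContDiffOn ℝ 2 (uhat k) (Metric.ball 0 σ))
    (hmem : ∀ x ∈ Metric.ball (0 : Fin n → ℝ) σ, (x, fun m => uhat m x) ∈ s)
    (hsolve : ∀ x ∈ Metric.ball (0 : Fin n → ℝ) σ, ∀ k,
      HasDerivAt (fun t => uhat k (Function.update x ((P k).min' (hP k)) t))
        (F k ((P k).min' (hP k)) x (fun m => uhat m x)) (x ((P k).min' (hP k)))) :
    -- the defects in the `min` directions vanish identically ...
    (∀ x ∈ Metric.ball (0 : Fin n → ℝ) σ, ∀ m,
      darbouxDefect n κ F uhat m ((P m).min' (hP m)) x = 0) ∧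
    -- ... and each remaining defect satisfies the linear homogeneous equation
    ∀ x ∈ Metric.ball (0 : Fin n → ℝ) σ, ∀ k, ∀ i ∈ P k,
      (P k).min' (hP k) < i →
      HasDerivAt
        (fun t => darbouxDefect n κ F uhat k i
          (Function.update x ((P k).min' (hP k)) t))
        ((∑ m : κ,
            (fderiv ℝ (fun q : (Fin n → ℝ) × (κ → ℝ) =>
                F k ((P k).min' (hP k)) q.1 q.2) (x, fun m' => uhat m' x)
              ((0 : Fin n → ℝ), Pi.single m 1)) *
            darbouxDefect n κ F uhat m i x) -
          ∑ m : κ,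
            (fderiv ℝ (fun q : (Fin n → ℝ) × (κ → ℝ) =>
                F k i q.1 q.2) (x, fun m' => uhat m' x)
              ((0 : Fin n → ℝ), Pi.single m 1)) *
            darbouxDefect n κ F uhat m ((P k).min' (hP k)) x)
        (x ((P k).min' (hP k))) :=
  darboux_defect_linear_system_general n κ P hP F s hs hFsm hint σ uhat huhat hmem hsolve
end
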